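/- arXiv:1901.00354 — 8 statements merged into one kernel-verified Lean document; each statement's English description precedes it below -/
import Mathlib

section
/- Fix a power budget P_max > 0, positive weights ρ_1,…,ρ_K, and unit-norm beamformers w̃_1,…,w̃_K. Then the optimal downlink and uplink balanced SINR levels coincide: sup over nonnegative p ∈ ℝ^K with Σ_k p_k ≤ P_max of min_{1≤k≤K} γ^dl_k(W̃,p)/ρ_k equals sup over nonnegative q ∈ ℝ^K with Σ_k q_k ≤ P_max of min_{1≤k≤K} γ^ul_k(W̃,q)/ρ_k. (Lemma 1, uplink–downlink duality for SINR balancing.) -/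
open scoped BigOperators

/-- `a^H b` : Hermitian inner product of two complex vectors. -/
noncomputable def ip {N : ℕ} (a b : Fin N → ℂ) : ℂ :=
  ∑ i, (starRingEnd ℂ) (a i) * b i

/-- Downlink SINR of user `k` for normalized beamformers `W` and power vector `p`. -/
noncomputable def sinrDL {N K : ℕ} (h : Fin K → Fin N → ℂ) (σ2 : ℝ)
    (W : Fin K → Fin N → ℂ) (p : Fin K → ℝ) (k : Fin K) : ℝ :=
  p k * ‖ip (h k) (W k)‖ ^ 2 /
    ((∑ j ∈ Finset.univ.erase k, p j * ‖ip (h k) (W j)‖ ^ 2) + σ2)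

/-- Virtual uplink SINR of user `k` for normalized beamformers `W` and power vector `q`. -/
noncomputable def sinrUL {N K : ℕ} (h : Fin K → Fin N → ℂ) (σ2 : ℝ)
    (W : Fin K → Fin N → ℂ) (q : Fin K → ℝ) (k : Fin K) : ℝ :=
  q k * ‖ip (h k) (W k)‖ ^ 2 /
    ((∑ j ∈ Finset.univ.erase k, q j * ‖ip (h j) (W k)‖ ^ 2) + σ2)

open Finset Filter

/-- Monotonicity of mulVec for entrywise nonneg matrices. -/
lemma mulVec_mono {K : ℕ} {M : Matrix (Fin K) (Fin K) ℝ}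
    (hM : ∀ k j, 0 ≤ M k j) {x y : Fin K → ℝ} (hxy : ∀ j, x j ≤ y j) (k : Fin K) :
    M.mulVec x k ≤ M.mulVec y k := by
  unfold Matrix.mulVec dotProduct
  exact Finset.sum_le_sum fun j _ => mul_le_mul_of_nonneg_left (hxy j) (hM k j)

lemma mulVec_nonneg {K : ℕ} {M : Matrix (Fin K) (Fin K) ℝ}
    (hM : ∀ k j, 0 ≤ M k j) {x : Fin K → ℝ} (hx : ∀ j, 0 ≤ x j) (k : Fin K) :
    0 ≤ M.mulVec x k := by
  have := mulVec_mono hM (x := 0) (y := x) (fun j => hx j) k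
  simpa using this

lemma pow_entry_nonneg {K : ℕ} {M : Matrix (Fin K) (Fin K) ℝ}
    (hM : ∀ k j, 0 ≤ M k j) (n : ℕ) (k j : Fin K) : 0 ≤ (M ^ n) k j := by
  induction n generalizing k j with
  | zero => simp [Matrix.one_apply]; positivity
  | succ n ih =>
    rw [pow_succ, Matrix.mul_apply]
    exact Finset.sum_nonneg fun m _ => mul_nonneg (ih k m) (hM m j)

/-- partial sums of Neumann series satisfy the recurrence. -/
lemma partial_rec {K : ℕ} (M : Matrix (Fin K) (Fin K) ℝ) (c : Fin K → ℝ) (n : ℕ) (k : Fin K) :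
    (∑ m ∈ Finset.range (n+1), (M ^ m).mulVec c k)
      = c k + M.mulVec (fun j => ∑ m ∈ Finset.range n, (M ^ m).mulVec c j) k := by
  rw [Finset.sum_range_succ' (fun m => (M ^ m).mulVec c k)]
  simp only [pow_zero, Matrix.one_mulVec]
  rw [add_comm]
  congr 1
  have : ∀ m : ℕ, (M ^ (m+1)).mulVec c k = M.mulVec ((M ^ m).mulVec c) k := by
    intro m
    rw [Matrix.mulVec_mulVec, ← pow_succ']
  simp only [this]
  unfold Matrix.mulVec dotProduct
  rw [Finset.sum_comm]
  congr 1
  ext j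
  rw [Finset.mul_sum]

lemma duality_core {K : ℕ} (hK : 0 < K) (g : Fin K → Fin K → ℝ)
    (hg : ∀ k j, 0 ≤ g k j) (hgd : ∀ k, 0 < g k k)
    (σ2 : ℝ) (hσ : 0 < σ2) (ρ : Fin K → ℝ) (hρ : ∀ k, 0 < ρ k)
    (C : ℝ) (hC : 0 < C) (p : Fin K → ℝ) (hp : ∀ k, 0 ≤ p k)
    (hfeas : ∀ k, C * ρ k * ((∑ j ∈ Finset.univ.erase k, g k j * p j) + σ2) ≤ p k * g k k) :
    ∃ q : Fin K → ℝ, (∀ k, 0 ≤ q k) ∧ (∑ k, q k) ≤ (∑ k, p k) ∧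
      ∀ k, C * ρ k * ((∑ j ∈ Finset.univ.erase k, g j k * q j) + σ2) ≤ q k * g k k := by
  haveI : Nonempty (Fin K) := ⟨⟨0, hK⟩⟩
  set d : Fin K → ℝ := fun k => C * ρ k / g k k with hd_def
  have hd : ∀ k, 0 < d k := fun k => div_pos (mul_pos hC (hρ k)) (hgd k)
  -- rewritten feasibility
  have hfeas' : ∀ k, d k * ((∑ j ∈ Finset.univ.erase k, g k j * p j) + σ2) ≤ p k := by
    intro k
    rw [hd_def]
    rw [div_mul_eq_mul_div, div_le_iff₀ (hgd k)]
    exact hfeas k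
  have hIp : ∀ k, 0 ≤ ∑ j ∈ Finset.univ.erase k, g k j * p j := fun k =>
    Finset.sum_nonneg fun j _ => mul_nonneg (hg k j) (hp j)
  have hpp : ∀ k, 0 < p k := by
    intro k
    have h1 : 0 < d k * ((∑ j ∈ Finset.univ.erase k, g k j * p j) + σ2) :=
      mul_pos (hd k) (by linarith [hIp k])
    linarith [hfeas' k]
  have hdsp : ∀ k, d k * σ2 ≤ p k := by
    intro k
    have := hfeas' k
    nlinarith [hIp k, (hd k).le]
  have hdg : ∀ k, d k * g k k = C * ρ k := fun k => div_mul_cancel₀ _ (hgd k).ne'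
  clear_value d
  -- matrices
  set A : Matrix (Fin K) (Fin K) ℝ :=
    Matrix.of (fun k j => if j = k then 0 else d k * g k j) with hA_def
  set B : Matrix (Fin K) (Fin K) ℝ :=
    Matrix.of (fun k j => if j = k then 0 else d k * g j k) with hB_def
  set b : Fin K → ℝ := fun k => d k * σ2 with hb_def
  have hbpos : ∀ k, 0 < b k := fun k => mul_pos (hd k) hσ
  have hA0 : ∀ k j, 0 ≤ A k j := by
    intro k j; rw [hA_def]; dsimp
    split
    · exact le_rfl
    · exact mul_nonneg (hd k).le (hg k j)
  have hApow0 : ∀ n (k j : Fin K), 0 ≤ (A ^ n) k j := pow_entry_nonneg hA0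
  -- unfold mulVec for A and B
  have hAmv : ∀ (x : Fin K → ℝ) (k : Fin K),
      A.mulVec x k = d k * ∑ j ∈ Finset.univ.erase k, g k j * x j := by
    intro x k
    unfold Matrix.mulVec dotProduct
    rw [Finset.mul_sum]
    rw [← Finset.sum_erase_add _ _ (Finset.mem_univ k)]
    have : A k k * x k = 0 := by rw [hA_def]; simp
    rw [this, add_zero]
    refine Finset.sum_congr rfl fun j hj => ?_
    have hjk : j ≠ k := Finset.ne_of_mem_erase hj
    rw [hA_def]
    simp [hjk]
    ring
  have hBmv : ∀ (x : Fin K → ℝ) (k : Fin K),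
      B.mulVec x k = d k * ∑ j ∈ Finset.univ.erase k, g j k * x j := by
    intro x k
    unfold Matrix.mulVec dotProduct
    rw [Finset.mul_sum]
    rw [← Finset.sum_erase_add _ _ (Finset.mem_univ k)]
    have : B k k * x k = 0 := by rw [hB_def]; simp
    rw [this, add_zero]
    refine Finset.sum_congr rfl fun j hj => ?_
    have hjk : j ≠ k := Finset.ne_of_mem_erase hj
    rw [hB_def]
    simp [hjk]
    ring
  -- B powers vs A powers
  have hBApow : ∀ n (k j : Fin K), (B ^ n) k j = d k / d j * (A ^ n) j k := by
    intro n
    induction n with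
    | zero =>
      intro k j
      by_cases hkj : k = j
      · subst hkj; simp [Matrix.one_apply, div_self (hd k).ne']
      · simp [Matrix.one_apply, hkj, Ne.symm hkj]
    | succ n ih =>
      intro k j
      rw [pow_succ', Matrix.mul_apply]
      have hr : (A ^ (n+1)) j k = ∑ m, (A ^ n) j m * A m k := by
        rw [pow_succ, Matrix.mul_apply]
      rw [hr, Finset.mul_sum]
      refine Finset.sum_congr rfl fun m _ => ?_
      rw [ih m j]
      have hBkm : B k m = d k / d m * A m k := by
        rw [hB_def, hA_def]
        simp only [Matrix.of_apply]
        by_cases hmk : m = k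
        · simp [hmk]
        · rw [if_neg hmk, if_neg (fun hh => hmk hh.symm)]
          field_simp [(hd m).ne', (hd k).ne']
      rw [hBkm]
      field_simp [(hd m).ne', (hd j).ne']
  -- contraction factor
  have hne : (Finset.univ : Finset (Fin K)).Nonempty := Finset.univ_nonempty
  set θ : ℝ := Finset.univ.sup' hne (fun k => 1 - d k * σ2 / p k) with hθ_def
  have hθ1 : θ < 1 := by
    rw [hθ_def, Finset.sup'_lt_iff]
    intro k _
    have : 0 < d k * σ2 / p k := div_pos (mul_pos (hd k) hσ) (hpp k)
    linarith
  have hθ0 : 0 ≤ θ := by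
    have hk0 : (1 : ℝ) - d ⟨0, hK⟩ * σ2 / p ⟨0, hK⟩ ≤ θ := by
      rw [hθ_def]
      exact Finset.le_sup' (fun k => 1 - d k * σ2 / p k) (Finset.mem_univ _)
    have : d ⟨0, hK⟩ * σ2 / p ⟨0, hK⟩ ≤ 1 :=
      (div_le_one (hpp _)).mpr (hdsp _)
    linarith
  have hθk : ∀ k, 1 - d k * σ2 / p k ≤ θ := by
    intro k
    rw [hθ_def]
    exact Finset.le_sup' (fun k => 1 - d k * σ2 / p k) (Finset.mem_univ k)
  have hAp : ∀ k, A.mulVec p k ≤ θ * p k := by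
    intro k
    rw [hAmv]
    have h1 : d k * (∑ j ∈ Finset.univ.erase k, g k j * p j) ≤ p k - d k * σ2 := by
      have := hfeas' k; nlinarith
    have h2 : p k - d k * σ2 = (1 - d k * σ2 / p k) * p k := by
      rw [sub_mul, one_mul, div_mul_cancel₀ _ (hpp k).ne']
    have h3 : (1 - d k * σ2 / p k) * p k ≤ θ * p k :=
      mul_le_mul_of_nonneg_right (hθk k) (hpp k).le
    linarith
  have hApn : ∀ n k, (A ^ n).mulVec p k ≤ θ ^ n * p k := by
    intro n
    induction n with
    | zero => intro k; simp [Matrix.one_mulVec]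
    | succ n ih =>
      intro k
      rw [pow_succ', ← Matrix.mulVec_mulVec]
      calc A.mulVec ((A ^ n).mulVec p) k ≤ A.mulVec (fun j => θ ^ n * p j) k :=
            mulVec_mono hA0 (fun j => ih j) k
        _ = θ ^ n * A.mulVec p k := by
            unfold Matrix.mulVec dotProduct
            rw [Finset.mul_sum]
            exact Finset.sum_congr rfl fun j _ => by ring
        _ ≤ θ ^ n * (θ * p k) :=
            mul_le_mul_of_nonneg_left (hAp k) (pow_nonneg hθ0 n)
        _ = θ ^ (n+1) * p k := by ring
  have hAentry : ∀ n (j k : Fin K), (A ^ n) j k * p k ≤ θ ^ n * p j := by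
    intro n j k
    have hle : (A ^ n) j k * p k ≤ (A ^ n).mulVec p j := by
      unfold Matrix.mulVec dotProduct
      exact Finset.single_le_sum
        (fun m _ => mul_nonneg (hApow0 n j m) (hp m)) (Finset.mem_univ k)
    exact hle.trans (hApn n j)
  -- the partial sums
  set s : ℕ → Fin K → ℝ := fun n k => ∑ m ∈ Finset.range n, (B ^ m).mulVec b k with hs_def
  have hBmb : ∀ m (k : Fin K), (B ^ m).mulVec b k = σ2 * (d k * ∑ j, (A ^ m) j k) := by
    intro m k
    unfold Matrix.mulVec dotProduct
    rw [Finset.mul_sum, Finset.mul_sum]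
    refine Finset.sum_congr rfl fun j _ => ?_
    dsimp only
    rw [hBApow m k j, hb_def]
    field_simp [(hd j).ne']
  have hB0 : ∀ (k j : Fin K), 0 ≤ B k j := by
    intro k j
    have := hBApow 1 k j
    rw [pow_one, pow_one] at this
    rw [this]
    exact mul_nonneg (div_pos (hd k) (hd j)).le (hA0 j k)
  have hBmb0 : ∀ m (k : Fin K), 0 ≤ (B ^ m).mulVec b k := fun m k =>
    mulVec_nonneg (pow_entry_nonneg hB0 m) (fun j => (hbpos j).le) k
  have hsmono : ∀ k, Monotone (fun n => s n k) := by
    intro k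
    apply monotone_nat_of_le_succ
    intro n
    simp only [hs_def, Finset.sum_range_succ]
    have := hBmb0 n k
    linarith
  have hBmb_le : ∀ m (k : Fin K), (B ^ m).mulVec b k ≤ θ ^ m * (σ2 * d k * (∑ j, p j) / p k) := by
    intro m k
    rw [hBmb]
    have h1 : ∀ j, (A ^ m) j k ≤ θ ^ m * p j / p k := by
      intro j
      rw [le_div_iff₀ (hpp k)]
      exact hAentry m j k
    have h2 : (∑ j, (A ^ m) j k) ≤ ∑ j, θ ^ m * p j / p k :=
      Finset.sum_le_sum fun j _ => h1 j
    have h3 : (∑ j, θ ^ m * p j / p k) = θ ^ m * (∑ j, p j) / p k := by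
      rw [Finset.mul_sum, Finset.sum_div]
    calc σ2 * (d k * ∑ j, (A ^ m) j k) ≤ σ2 * (d k * (θ ^ m * (∑ j, p j) / p k)) := by
          apply mul_le_mul_of_nonneg_left _ hσ.le
          apply mul_le_mul_of_nonneg_left _ (hd k).le
          rw [← h3]; exact h2
      _ = θ ^ m * (σ2 * d k * (∑ j, p j) / p k) := by ring
  have hgeom : ∀ n, (∑ m ∈ Finset.range n, θ ^ m) ≤ 1 / (1 - θ) := by
    intro n
    rw [le_div_iff₀ (by linarith : (0:ℝ) < 1 - θ)]
    have := geom_sum_mul θ n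
    have hθn : 0 ≤ θ ^ n := pow_nonneg hθ0 n
    nlinarith [this]
  have hsbdd : ∀ k n, s n k ≤ (1 / (1 - θ)) * (σ2 * d k * (∑ j, p j) / p k) := by
    intro k n
    rw [hs_def]
    calc (∑ m ∈ Finset.range n, (B ^ m).mulVec b k)
        ≤ ∑ m ∈ Finset.range n, θ ^ m * (σ2 * d k * (∑ j, p j) / p k) :=
          Finset.sum_le_sum fun m _ => hBmb_le m k
      _ = (∑ m ∈ Finset.range n, θ ^ m) * (σ2 * d k * (∑ j, p j) / p k) := by
          rw [Finset.sum_mul]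
      _ ≤ (1 / (1 - θ)) * (σ2 * d k * (∑ j, p j) / p k) := by
          apply mul_le_mul_of_nonneg_right (hgeom n)
          exact div_nonneg (mul_nonneg (mul_nonneg hσ.le (hd k).le)
            (Finset.sum_nonneg fun j _ => hp j)) (hpp k).le
  -- the limit q
  have hbddA : ∀ k, BddAbove (Set.range fun n => s n k) := by
    intro k
    refine ⟨(1 / (1 - θ)) * (σ2 * d k * (∑ j, p j) / p k), ?_⟩
    rintro x ⟨n, rfl⟩
    exact hsbdd k n
  set q : Fin K → ℝ := fun k => ⨆ n, s n k with hq_def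
  have htend : ∀ k, Filter.Tendsto (fun n => s n k) Filter.atTop (nhds (q k)) := fun k =>
    tendsto_atTop_ciSup (hsmono k) (hbddA k)
  have hq0 : ∀ k, 0 ≤ q k := by
    intro k
    have h0 : s 0 k ≤ q k := le_ciSup (hbddA k) 0
    have : s 0 k = 0 := by simp [hs_def]
    linarith
  have hrec : ∀ n k, s (n+1) k = b k + B.mulVec (s n) k := by
    intro n k
    simp only [hs_def]
    exact partial_rec B b n k
  have hfix : ∀ k, q k = b k + B.mulVec q k := by
    intro k
    have t1 : Filter.Tendsto (fun n => s (n+1) k) Filter.atTop (nhds (q k)) :=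
      (htend k).comp (Filter.tendsto_add_atTop_nat 1)
    have t2 : Filter.Tendsto (fun n => b k + B.mulVec (s n) k) Filter.atTop
        (nhds (b k + B.mulVec q k)) := by
      have hmv : ∀ (x : Fin K → ℝ), B.mulVec x k = ∑ j, B k j * x j := fun x => rfl
      simp only [hmv]
      exact Filter.Tendsto.const_add _
        (tendsto_finset_sum _ fun j _ => (htend j).const_mul (B k j))
    have t1' : Filter.Tendsto (fun n => s (n+1) k) Filter.atTop (nhds (b k + B.mulVec q k)) := by
      simpa only [hrec] using t2
    exact tendsto_nhds_unique t1 t1'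
  -- sum bound
  have hfeas'' : ∀ k, b k + A.mulVec p k ≤ p k := by
    intro k
    rw [hAmv]
    simp only [hb_def]
    have h1 := hfeas' k
    have h2 : d k * ((∑ j ∈ Finset.univ.erase k, g k j * p j) + σ2)
        = d k * (∑ j ∈ Finset.univ.erase k, g k j * p j) + d k * σ2 := by ring
    linarith
  have ht : ∀ n k, (∑ m ∈ Finset.range n, (A ^ m).mulVec b k) + (A ^ n).mulVec p k ≤ p k := by
    intro n
    induction n with
    | zero => intro k; simp [Matrix.one_mulVec]
    | succ n ih =>
      intro k
      rw [partial_rec A b n k]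
      have hp1 : (A ^ (n+1)).mulVec p k = A.mulVec ((A ^ n).mulVec p) k := by
        rw [Matrix.mulVec_mulVec, ← pow_succ']
      rw [hp1]
      have hadd : A.mulVec (fun j => ∑ m ∈ Finset.range n, (A ^ m).mulVec b j) k
          + A.mulVec ((A ^ n).mulVec p) k
          = A.mulVec (fun j => (∑ m ∈ Finset.range n, (A ^ m).mulVec b j)
              + (A ^ n).mulVec p j) k := by
        have := Matrix.mulVec_add A (fun j => ∑ m ∈ Finset.range n, (A ^ m).mulVec b j)
          ((A ^ n).mulVec p)
        have h2 := congrFun this k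
        simp only [Pi.add_apply] at h2
        exact h2.symm
      have hmono' : A.mulVec (fun j => (∑ m ∈ Finset.range n, (A ^ m).mulVec b j)
          + (A ^ n).mulVec p j) k ≤ A.mulVec p k :=
        mulVec_mono hA0 (fun j => ih j) k
      have := hfeas'' k
      linarith
  have hsum_m : ∀ m, (∑ k, (B ^ m).mulVec b k) = ∑ k, (A ^ m).mulVec b k := by
    intro m
    have hL : (∑ k, (B ^ m).mulVec b k) = ∑ k, ∑ j, σ2 * (d k * (A ^ m) j k) := by
      refine Finset.sum_congr rfl fun k _ => ?_
      rw [hBmb m k, Finset.mul_sum, Finset.mul_sum]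
    have hR : (∑ k, (A ^ m).mulVec b k) = ∑ j, ∑ k, (A ^ m) j k * (d k * σ2) := by
      refine Finset.sum_congr rfl fun j _ => ?_
      rfl
    rw [hL, hR, Finset.sum_comm]
    exact Finset.sum_congr rfl fun j _ => Finset.sum_congr rfl fun k _ => by ring
  have hsum_n : ∀ n, (∑ k, s n k) ≤ ∑ k, p k := by
    intro n
    have h1 : (∑ k, s n k) = ∑ m ∈ Finset.range n, ∑ k, (B ^ m).mulVec b k := by
      simp only [hs_def]
      exact Finset.sum_comm
    have h2 : (∑ m ∈ Finset.range n, ∑ k, (B ^ m).mulVec b k)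
        = ∑ k, ∑ m ∈ Finset.range n, (A ^ m).mulVec b k := by
      calc (∑ m ∈ Finset.range n, ∑ k, (B ^ m).mulVec b k)
          = ∑ m ∈ Finset.range n, ∑ k, (A ^ m).mulVec b k :=
            Finset.sum_congr rfl fun m _ => hsum_m m
        _ = ∑ k, ∑ m ∈ Finset.range n, (A ^ m).mulVec b k := Finset.sum_comm
    rw [h1, h2]
    refine Finset.sum_le_sum fun k _ => ?_
    have h3 := ht n k
    have h4 : 0 ≤ (A ^ n).mulVec p k :=
      mulVec_nonneg (pow_entry_nonneg hA0 n) hp k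
    linarith
  -- conclude
  have hqsum : (∑ k, q k) ≤ ∑ k, p k := by
    have htends : Filter.Tendsto (fun n => ∑ k, s n k) Filter.atTop (nhds (∑ k, q k)) :=
      tendsto_finset_sum _ fun k _ => htend k
    exact le_of_tendsto htends (Filter.Eventually.of_forall hsum_n)
  refine ⟨q, hq0, hqsum, fun k => ?_⟩
  have hqk : q k = d k * ((∑ j ∈ Finset.univ.erase k, g j k * q j) + σ2) := by
    have := hfix k
    rw [hBmv] at this
    simp only [hb_def] at this
    rw [this]
    ring
  have : q k * g k k = C * ρ k * ((∑ j ∈ Finset.univ.erase k, g j k * q j) + σ2) := by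
    rw [hqk]
    rw [mul_comm (d k) _, mul_assoc, hdg k]
    ring
  linarith

/-- `0` belongs to the feasible-value set (take `p = 0`). -/
lemma zero_mem_S {K : ℕ} (hK : 0 < K) (a : Fin K → ℝ) (gI : Fin K → Fin K → ℝ)
    (σ2 Pmax : ℝ) (hσ : 0 < σ2) (hP : 0 < Pmax) (ρ : Fin K → ℝ) :
    (0:ℝ) ∈ {v : ℝ | ∃ p : Fin K → ℝ, (∀ k, 0 ≤ p k) ∧ (∑ k, p k) ≤ Pmax ∧
      v = ⨅ k, (p k * a k / ((∑ j ∈ Finset.univ.erase k, gI k j * p j) + σ2)) / ρ k} := by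
  haveI : Nonempty (Fin K) := ⟨⟨0, hK⟩⟩
  refine ⟨0, fun k => le_rfl, by simp [hP.le], ?_⟩
  have : ∀ k : Fin K, ((0:Fin K → ℝ) k * a k /
      ((∑ j ∈ Finset.univ.erase k, gI k j * (0:Fin K → ℝ) j) + σ2)) / ρ k = 0 := by
    intro k; simp
  rw [iInf_congr this, ciInf_const]

lemma bdd_S {K : ℕ} (hK : 0 < K) (a : Fin K → ℝ) (ha : ∀ k, 0 ≤ a k)
    (gI : Fin K → Fin K → ℝ)
    (σ2 Pmax : ℝ) (hσ : 0 < σ2) (hP : 0 < Pmax) (ρ : Fin K → ℝ) (hρ : ∀ k, 0 < ρ k)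
    (hgI : ∀ k j, 0 ≤ gI k j) :
    BddAbove {v : ℝ | ∃ p : Fin K → ℝ, (∀ k, 0 ≤ p k) ∧ (∑ k, p k) ≤ Pmax ∧
      v = ⨅ k, (p k * a k / ((∑ j ∈ Finset.univ.erase k, gI k j * p j) + σ2)) / ρ k} := by
  haveI : Nonempty (Fin K) := ⟨⟨0, hK⟩⟩
  set k₀ : Fin K := ⟨0, hK⟩
  refine ⟨Pmax * a k₀ / σ2 / ρ k₀, ?_⟩
  rintro v ⟨p, hp0, hpP, rfl⟩
  have hD : σ2 ≤ (∑ j ∈ Finset.univ.erase k₀, gI k₀ j * p j) + σ2 := by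
    have : 0 ≤ ∑ j ∈ Finset.univ.erase k₀, gI k₀ j * p j :=
      Finset.sum_nonneg fun j _ => mul_nonneg (hgI k₀ j) (hp0 j)
    linarith
  have hpk : p k₀ ≤ Pmax := by
    have : p k₀ ≤ ∑ k, p k :=
      Finset.single_le_sum (fun k _ => hp0 k) (Finset.mem_univ k₀)
    linarith
  have h1 : (p k₀ * a k₀ / ((∑ j ∈ Finset.univ.erase k₀, gI k₀ j * p j) + σ2)) / ρ k₀
      ≤ Pmax * a k₀ / σ2 / ρ k₀ := by
    apply div_le_div_of_nonneg_right _ (hρ k₀).le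
    calc p k₀ * a k₀ / ((∑ j ∈ Finset.univ.erase k₀, gI k₀ j * p j) + σ2)
        ≤ p k₀ * a k₀ / σ2 :=
          div_le_div_of_nonneg_left (mul_nonneg (hp0 k₀) (ha k₀)) hσ hD
      _ ≤ Pmax * a k₀ / σ2 :=
          div_le_div_of_nonneg_right (mul_le_mul_of_nonneg_right hpk (ha k₀)) hσ.le
  exact le_trans (ciInf_le (Finite.bddBelow_range _) k₀) h1

lemma half {K : ℕ} (hK : 0 < K) (g : Fin K → Fin K → ℝ)
    (hg : ∀ k j, 0 ≤ g k j) (hgd : ∀ k, 0 < g k k)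
    (σ2 Pmax : ℝ) (hσ : 0 < σ2) (hP : 0 < Pmax)
    (ρ : Fin K → ℝ) (hρ : ∀ k, 0 < ρ k) :
    sSup {v : ℝ | ∃ p : Fin K → ℝ, (∀ k, 0 ≤ p k) ∧ (∑ k, p k) ≤ Pmax ∧
      v = ⨅ k, (p k * g k k / ((∑ j ∈ Finset.univ.erase k, g k j * p j) + σ2)) / ρ k}
    ≤ sSup {v : ℝ | ∃ q : Fin K → ℝ, (∀ k, 0 ≤ q k) ∧ (∑ k, q k) ≤ Pmax ∧
      v = ⨅ k, (q k * g k k / ((∑ j ∈ Finset.univ.erase k, g j k * q j) + σ2)) / ρ k} := by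
  haveI : Nonempty (Fin K) := ⟨⟨0, hK⟩⟩
  have h0₁ := zero_mem_S hK (fun k => g k k) (fun k j => g k j) σ2 Pmax hσ hP ρ
  have h0₂ := zero_mem_S hK (fun k => g k k) (fun k j => g j k) σ2 Pmax hσ hP ρ
  have hbdd₂ := bdd_S hK (fun k => g k k) (fun k => (hgd k).le) (fun k j => g j k)
    σ2 Pmax hσ hP ρ hρ (fun k j => hg j k)
  apply csSup_le ⟨0, h0₁⟩
  rintro v ⟨p, hp0, hpP, rfl⟩
  set C : ℝ := ⨅ k, (p k * g k k / ((∑ j ∈ Finset.univ.erase k, g k j * p j) + σ2)) / ρ k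
    with hC_def
  have hDpos : ∀ k, 0 < (∑ j ∈ Finset.univ.erase k, g k j * p j) + σ2 := by
    intro k
    have : 0 ≤ ∑ j ∈ Finset.univ.erase k, g k j * p j :=
      Finset.sum_nonneg fun j _ => mul_nonneg (hg k j) (hp0 j)
    linarith
  have hC0 : 0 ≤ C := by
    apply le_ciInf
    intro k
    apply div_nonneg _ (hρ k).le
    exact div_nonneg (mul_nonneg (hp0 k) (hgd k).le) (hDpos k).le
  rcases eq_or_lt_of_le hC0 with hCz | hCp
  · rw [← hCz]
    exact le_csSup hbdd₂ h0₂
  · have hfeas : ∀ k, C * ρ k * ((∑ j ∈ Finset.univ.erase k, g k j * p j) + σ2)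
        ≤ p k * g k k := by
      intro k
      have h1 : C ≤ (p k * g k k / ((∑ j ∈ Finset.univ.erase k, g k j * p j) + σ2)) / ρ k :=
        ciInf_le (Finite.bddBelow_range _) k
      rw [div_div, le_div_iff₀ (mul_pos (hDpos k) (hρ k))] at h1
      calc C * ρ k * ((∑ j ∈ Finset.univ.erase k, g k j * p j) + σ2)
          = C * (((∑ j ∈ Finset.univ.erase k, g k j * p j) + σ2) * ρ k) := by ring
        _ ≤ p k * g k k := h1
    obtain ⟨q, hq0, hqsum, hqfeas⟩ :=
      duality_core hK g hg hgd σ2 hσ ρ hρ C hCp p hp0 hfeas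
    have hEpos : ∀ k, 0 < (∑ j ∈ Finset.univ.erase k, g j k * q j) + σ2 := by
      intro k
      have : 0 ≤ ∑ j ∈ Finset.univ.erase k, g j k * q j :=
        Finset.sum_nonneg fun j _ => mul_nonneg (hg j k) (hq0 j)
      linarith
    have hw : C ≤ ⨅ k, (q k * g k k / ((∑ j ∈ Finset.univ.erase k, g j k * q j) + σ2)) / ρ k := by
      apply le_ciInf
      intro k
      rw [div_div, le_div_iff₀ (mul_pos (hEpos k) (hρ k))]
      calc C * (((∑ j ∈ Finset.univ.erase k, g j k * q j) + σ2) * ρ k)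
          = C * ρ k * ((∑ j ∈ Finset.univ.erase k, g j k * q j) + σ2) := by ring
        _ ≤ q k * g k k := hqfeas k
    exact hw.trans (le_csSup hbdd₂ ⟨q, hq0, hqsum.trans hpP, rfl⟩)

/-- Lemma 1 (uplink–downlink duality for SINR balancing). -/
theorem uplink_downlink_duality_sinr_balancing
    {N K : ℕ} (hN : 0 < N) (hK : 0 < K)
    (h : Fin K → Fin N → ℂ) (σ2 : ℝ) (hσ : 0 < σ2)
    (Pmax : ℝ) (hP : 0 < Pmax)
    (ρ : Fin K → ℝ) (hρ : ∀ k, 0 < ρ k)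
    (W : Fin K → Fin N → ℂ) (hW : ∀ k, ∑ i, ‖W k i‖ ^ 2 = 1) :
    sSup {v : ℝ | ∃ p : Fin K → ℝ, (∀ k, 0 ≤ p k) ∧ (∑ k, p k) ≤ Pmax ∧
        v = ⨅ k, sinrDL h σ2 W p k / ρ k} =
    sSup {v : ℝ | ∃ q : Fin K → ℝ, (∀ k, 0 ≤ q k) ∧ (∑ k, q k) ≤ Pmax ∧
        v = ⨅ k, sinrUL h σ2 W q k / ρ k} := by
  haveI : Nonempty (Fin K) := ⟨⟨0, hK⟩⟩
  set G : Fin K → Fin K → ℝ := fun k j => ‖ip (h k) (W j)‖ ^ 2 with hG_def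
  have hG : ∀ k j, 0 ≤ G k j := fun k j => by positivity
  have eDL : ∀ p : Fin K → ℝ, (⨅ k, sinrDL h σ2 W p k / ρ k)
      = ⨅ k, (p k * G k k / ((∑ j ∈ Finset.univ.erase k, G k j * p j) + σ2)) / ρ k := by
    intro p
    refine iInf_congr fun k => ?_
    unfold sinrDL
    rw [show (∑ j ∈ Finset.univ.erase k, p j * ‖ip (h k) (W j)‖ ^ 2)
        = ∑ j ∈ Finset.univ.erase k, G k j * p j from
      Finset.sum_congr rfl fun j _ => mul_comm _ _]
  have eUL : ∀ q : Fin K → ℝ, (⨅ k, sinrUL h σ2 W q k / ρ k)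
      = ⨅ k, (q k * G k k / ((∑ j ∈ Finset.univ.erase k, G j k * q j) + σ2)) / ρ k := by
    intro q
    refine iInf_congr fun k => ?_
    unfold sinrUL
    rw [show (∑ j ∈ Finset.univ.erase k, q j * ‖ip (h j) (W k)‖ ^ 2)
        = ∑ j ∈ Finset.univ.erase k, G j k * q j from
      Finset.sum_congr rfl fun j _ => mul_comm _ _]
  have hsetDL : {v : ℝ | ∃ p : Fin K → ℝ, (∀ k, 0 ≤ p k) ∧ (∑ k, p k) ≤ Pmax ∧
        v = ⨅ k, sinrDL h σ2 W p k / ρ k}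
      = {v : ℝ | ∃ p : Fin K → ℝ, (∀ k, 0 ≤ p k) ∧ (∑ k, p k) ≤ Pmax ∧
        v = ⨅ k, (p k * G k k / ((∑ j ∈ Finset.univ.erase k, G k j * p j) + σ2)) / ρ k} := by
    ext v
    constructor
    · rintro ⟨p, h1, h2, rfl⟩; exact ⟨p, h1, h2, eDL p⟩
    · rintro ⟨p, h1, h2, rfl⟩; exact ⟨p, h1, h2, (eDL p).symm⟩
  have hsetUL : {v : ℝ | ∃ q : Fin K → ℝ, (∀ k, 0 ≤ q k) ∧ (∑ k, q k) ≤ Pmax ∧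
        v = ⨅ k, sinrUL h σ2 W q k / ρ k}
      = {v : ℝ | ∃ q : Fin K → ℝ, (∀ k, 0 ≤ q k) ∧ (∑ k, q k) ≤ Pmax ∧
        v = ⨅ k, (q k * G k k / ((∑ j ∈ Finset.univ.erase k, G j k * q j) + σ2)) / ρ k} := by
    ext v
    constructor
    · rintro ⟨q, h1, h2, rfl⟩; exact ⟨q, h1, h2, eUL q⟩
    · rintro ⟨q, h1, h2, rfl⟩; exact ⟨q, h1, h2, (eUL q).symm⟩
  rw [hsetDL, hsetUL]
  by_cases hdiag : ∀ k, 0 < G k k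
  · apply le_antisymm
    · exact half hK G hG hdiag σ2 Pmax hσ hP ρ hρ
    · exact half hK (fun k j => G j k) (fun k j => hG j k) hdiag σ2 Pmax hσ hP ρ hρ
  · push_neg at hdiag
    obtain ⟨k0, hk0le⟩ := hdiag
    have hk0 : G k0 k0 = 0 := le_antisymm hk0le (hG k0 k0)
    have key : ∀ gI : Fin K → Fin K → ℝ, (∀ k j, 0 ≤ gI k j) →
        sSup {v : ℝ | ∃ p : Fin K → ℝ, (∀ k, 0 ≤ p k) ∧ (∑ k, p k) ≤ Pmax ∧
          v = ⨅ k, (p k * G k k / ((∑ j ∈ Finset.univ.erase k, gI k j * p j) + σ2)) / ρ k}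
          = 0 := by
      intro gI hgI
      apply le_antisymm
      · apply csSup_le ⟨0, zero_mem_S hK (fun k => G k k) gI σ2 Pmax hσ hP ρ⟩
        rintro v ⟨p, hp0, hpP, rfl⟩
        have h1 : (⨅ k, (p k * G k k / ((∑ j ∈ Finset.univ.erase k, gI k j * p j) + σ2)) / ρ k)
            ≤ (p k0 * G k0 k0 / ((∑ j ∈ Finset.univ.erase k0, gI k0 j * p j) + σ2)) / ρ k0 :=
          ciInf_le (Finite.bddBelow_range _) k0
        have h2 : (p k0 * G k0 k0 / ((∑ j ∈ Finset.univ.erase k0, gI k0 j * p j) + σ2)) / ρ k0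
            = 0 := by
          rw [hk0]
          simp
        rw [h2] at h1
        exact h1
      · exact le_csSup (bdd_S hK (fun k => G k k) (fun k => hG k k) gI σ2 Pmax hσ hP ρ hρ hgI)
          (zero_mem_S hK (fun k => G k k) gI σ2 Pmax hσ hP ρ)
    rw [key (fun k j => G k j) (fun k j => hG k j), key (fun k j => G j k) (fun k j => hG j k)]
end

section
/- Fix a power budget P_max > 0, unit-norm beamformers w̃_1,…,w̃_K, and SINR targets γ_1,…,γ_K ≥ 0. Then there exists a nonnegative p ∈ ℝ^K with Σ_k p_k ≤ P_max and γ^dl_k(W̃,p) ≥ γ_k for all k if and only if there exists a nonnegative q ∈ ℝ^K with Σ_k q_k ≤ P_max and γ^ul_k(W̃,q) ≥ γ_k for all k. (The uplink and downlink have the same achievable SINR region for a fixed set of normalized beamformers.) -/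
open scoped BigOperators

/-!
For targets `γ k > 0` the downlink constraints read `B p ≥ σ²𝟙` and the uplink ones
`Bᵀ q ≥ σ²𝟙`, where the Z-matrix `B` has diagonal `G k k / γ k` and off-diagonal entries `-G k j`.
A feasible `p ≥ 0` makes `B` a nonsingular M-matrix, i.e. `B⁻¹ ≥ 0`, so `B⁻¹ (σ²𝟙) ≤ p` and
`q = σ² B⁻ᵀ 𝟙 ≥ 0` solves the uplink with total power `σ² 𝟙ᵀ B⁻¹ 𝟙 = 𝟙ᵀ B⁻¹ (σ²𝟙) ≤ 𝟙ᵀ p`.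
Users with `γ k = 0` are removed beforehand and get power `0`; swapping the roles of `G` and `Gᵀ`
gives the converse.
-/

open Finset Matrix

namespace Matrix

variable {ι : Type*}

def IsZMatrix (B : Matrix ι ι ℝ) : Prop :=
  ∀ i j, i ≠ j → B i j ≤ 0

variable [Fintype ι] [DecidableEq ι] {B : Matrix ι ι ℝ}

theorem IsZMatrix.mulVec_apply_le (hZ : B.IsZMatrix) {v : ι → ℝ} (hv : 0 ≤ v)
    (i : ι) : (B *ᵥ v) i ≤ B i i * v i := by
  rw [mulVec, dotProduct, ← add_sum_erase _ _ (mem_univ i), add_le_iff_nonpos_right]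
  exact sum_nonpos fun j hj =>
    mul_nonpos_of_nonpos_of_nonneg (hZ i j (ne_of_mem_erase hj).symm) (hv j)

theorem IsZMatrix.pos_of_mulVec_pos (hZ : B.IsZMatrix) {v : ι → ℝ} (hv : 0 ≤ v)
    (hBv : ∀ i, 0 < (B *ᵥ v) i) (i : ι) : 0 < v i := by
  have hdiag := (hBv i).trans_le (hZ.mulVec_apply_le hv i)
  exact (hv i).lt_of_ne fun h => by simp [← h] at hdiag

theorem IsZMatrix.nonneg_of_nonneg_mulVec (hZ : B.IsZMatrix) {v : ι → ℝ} (hv : 0 ≤ v)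
    (hBv : ∀ i, 0 < (B *ᵥ v) i) {x : ι → ℝ} (hBx : 0 ≤ B *ᵥ x) : 0 ≤ x := by
  by_contra hneg
  obtain ⟨i₀, hi₀⟩ : ∃ i, x i < 0 := by simpa [Pi.le_def] using hneg
  have hvpos := hZ.pos_of_mulVec_pos hv hBv
  -- shift `x` along `v` until it first touches zero, at the coordinate `k`
  obtain ⟨k, -, hk⟩ := exists_max_image univ (fun i => -x i / v i) ⟨i₀, mem_univ _⟩
  set t := -x k / v k
  have ht : 0 < t := (div_pos (neg_pos.2 hi₀) (hvpos i₀)).trans_le (hk i₀ (mem_univ _))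
  set y := x + t • v
  have hy : 0 ≤ y := fun i => by
    have := (div_le_iff₀ (hvpos i)).1 (hk i (mem_univ i))
    simp only [y, Pi.add_apply, Pi.smul_apply, smul_eq_mul, Pi.zero_apply]
    linarith
  have hyk : y k = 0 := by
    simp only [y, t, Pi.add_apply, Pi.smul_apply, smul_eq_mul]
    field_simp [(hvpos k).ne']
    ring
  have hBy : (B *ᵥ y) k = (B *ᵥ x) k + t * (B *ᵥ v) k := by
    simp [y, mulVec_add, mulVec_smul]
  have := hZ.mulVec_apply_le hy k
  rw [hyk, mul_zero, hBy] at this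
  have hBxk : 0 ≤ (B *ᵥ x) k := hBx k
  linarith [mul_pos ht (hBv k)]

theorem IsZMatrix.isUnit_of_mulVec_pos (hZ : B.IsZMatrix) {v : ι → ℝ} (hv : 0 ≤ v)
    (hBv : ∀ i, 0 < (B *ᵥ v) i) : IsUnit B := by
  refine mulVec_injective_iff_isUnit.1 fun x y hxy => ?_
  have hBxy : B *ᵥ (x - y) = 0 := by rw [mulVec_sub, hxy, sub_self]
  have h₁ := hZ.nonneg_of_nonneg_mulVec hv hBv hBxy.ge
  have h₂ := hZ.nonneg_of_nonneg_mulVec hv hBv (x := y - x) (by rw [mulVec_sub, hxy, sub_self])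
  exact le_antisymm (sub_nonneg.1 h₂) (sub_nonneg.1 h₁)

theorem IsZMatrix.inv_nonneg_of_mulVec_pos (hZ : B.IsZMatrix) {v : ι → ℝ} (hv : 0 ≤ v)
    (hBv : ∀ i, 0 < (B *ᵥ v) i) (i j : ι) : 0 ≤ B⁻¹ i j := by
  have hB := (isUnit_iff_isUnit_det B).1 (hZ.isUnit_of_mulVec_pos hv hBv)
  refine hZ.nonneg_of_nonneg_mulVec hv hBv (x := fun i => B⁻¹ i j) (fun l => ?_) i
  have : (B *ᵥ fun i => B⁻¹ i j) l = (B * B⁻¹) l j := rfl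
  rw [this, mul_nonsing_inv B hB, one_apply]
  positivity

theorem IsZMatrix.exists_vecMul_eq_const (hZ : B.IsZMatrix) {v : ι → ℝ} (hv : 0 ≤ v)
    {c : ℝ} (hc : 0 < c) (hBvc : ∀ i, c ≤ (B *ᵥ v) i) :
    ∃ q : ι → ℝ, 0 ≤ q ∧ q ᵥ* B = (fun _ => c) ∧ ∑ i, q i ≤ ∑ i, v i := by
  have hBv i : 0 < (B *ᵥ v) i := hc.trans_le (hBvc i)
  have hB := (isUnit_iff_isUnit_det B).1 (hZ.isUnit_of_mulVec_pos hv hBv)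
  set c₁ : ι → ℝ := fun _ => c
  have hrv : B⁻¹ *ᵥ c₁ ≤ v := by
    refine sub_nonneg.1 (hZ.nonneg_of_nonneg_mulVec hv hBv fun i => ?_)
    simpa [mulVec_sub, mulVec_mulVec, mul_nonsing_inv _ hB, c₁] using hBvc i
  refine ⟨c₁ ᵥ* B⁻¹, fun j => sum_nonneg fun i _ =>
      mul_nonneg hc.le (hZ.inv_nonneg_of_mulVec_pos hv hBv i j),
    by rw [vecMul_vecMul, nonsing_inv_mul _ hB, vecMul_one], ?_⟩
  calc ∑ j, (c₁ ᵥ* B⁻¹) j = ∑ i, (B⁻¹ *ᵥ c₁) i := by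
        simp only [vecMul, mulVec, dotProduct, c₁]
        rw [sum_comm]
        simp only [mul_comm]
    _ ≤ ∑ i, v i := sum_le_sum fun i _ => hrv i

end Matrix

section SINRTargets

variable {ι : Type*} [DecidableEq ι]

noncomputable def sinrMatrix (G : Matrix ι ι ℝ) (γ : ι → ℝ) : Matrix ι ι ℝ :=
  of fun k j => if k = j then G k k / γ k else -G k j

theorem sinrMatrix_transpose (G : Matrix ι ι ℝ) (γ : ι → ℝ) :
    sinrMatrix Gᵀ γ = (sinrMatrix G γ)ᵀ := by
  ext k j
  by_cases hkj : k = j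
  · subst hkj; simp [sinrMatrix]
  · simp [sinrMatrix, hkj, Ne.symm hkj]

theorem isZMatrix_sinrMatrix {G : Matrix ι ι ℝ} (hG : ∀ k j, 0 ≤ G k j) (γ : ι → ℝ) :
    (sinrMatrix G γ).IsZMatrix := fun k j hkj => by
  simpa [sinrMatrix, hkj] using hG k j

variable [Fintype ι]

/-- `G k j` is the gain of transmission `j` at receiver `k`, so the uplink uses `Gᵀ`. -/
def MeetsSINRTargets (G : Matrix ι ι ℝ) (σ2 : ℝ) (γ p : ι → ℝ) : Prop :=
  ∀ k, γ k * (∑ j ∈ univ.erase k, p j * G k j + σ2) ≤ p k * G k k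

theorem sinrMatrix_mulVec_apply (G : Matrix ι ι ℝ) (γ p : ι → ℝ) (k : ι) :
    (sinrMatrix G γ *ᵥ p) k = G k k / γ k * p k - ∑ j ∈ univ.erase k, p j * G k j := by
  rw [mulVec, dotProduct, ← add_sum_erase _ _ (mem_univ k), sub_eq_add_neg, ← sum_neg_distrib]
  congr 1
  · simp [sinrMatrix]
  · refine sum_congr rfl fun j hj => ?_
    simp [sinrMatrix, (ne_of_mem_erase hj).symm, mul_comm]

theorem meetsSINRTargets_iff_le_sinrMatrix_mulVec {G : Matrix ι ι ℝ} {σ2 : ℝ} {γ : ι → ℝ}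
    (hγ : ∀ k, 0 < γ k) (p : ι → ℝ) :
    MeetsSINRTargets G σ2 γ p ↔ ∀ k, σ2 ≤ (sinrMatrix G γ *ᵥ p) k := by
  refine forall_congr' fun k => ?_
  rw [sinrMatrix_mulVec_apply, le_sub_iff_add_le, div_mul_eq_mul_div, le_div_iff₀ (hγ k),
    mul_comm, add_comm, mul_comm (G k k)]

theorem MeetsSINRTargets.exists_transpose_of_pos {G : Matrix ι ι ℝ} {σ2 : ℝ} {γ p : ι → ℝ}
    (hG : ∀ k j, 0 ≤ G k j) (hσ : 0 < σ2) (hγ : ∀ k, 0 < γ k) (hp : 0 ≤ p)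
    (hpG : MeetsSINRTargets G σ2 γ p) :
    ∃ q, 0 ≤ q ∧ ∑ k, q k ≤ ∑ k, p k ∧ MeetsSINRTargets Gᵀ σ2 γ q := by
  have hBp := (meetsSINRTargets_iff_le_sinrMatrix_mulVec hγ p).1 hpG
  obtain ⟨q, hq, hqB, hqp⟩ := (isZMatrix_sinrMatrix hG γ).exists_vecMul_eq_const hp hσ hBp
  refine ⟨q, hq, hqp, (meetsSINRTargets_iff_le_sinrMatrix_mulVec hγ q).2 fun k => ?_⟩
  rw [sinrMatrix_transpose, mulVec_transpose, hqB]

theorem sum_erase_val_eq_sum_filter {M : Type*} [AddCommMonoid M] {P : ι → Prop}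
    [DecidablePred P] (k : Subtype P) (f : ι → M) :
    ∑ j ∈ univ.erase k, f j = ∑ j ∈ univ.erase (k : ι) with P j, f j := by
  rw [← sum_subtype_eq_sum_filter]
  congr 1
  ext j
  simp [Subtype.ext_iff]

variable (P : ι → Prop) [DecidablePred P]

theorem MeetsSINRTargets.subtype {G : Matrix ι ι ℝ} {σ2 : ℝ} {γ p : ι → ℝ}
    (hG : ∀ k j, 0 ≤ G k j) (hγ : ∀ k, 0 ≤ γ k) (hp : 0 ≤ p)
    (hpG : MeetsSINRTargets G σ2 γ p) :
    MeetsSINRTargets (G.submatrix (↑) (↑)) σ2 (fun k : Subtype P => γ k) (fun k => p k) := by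
  intro k
  refine le_trans (mul_le_mul_of_nonneg_left (add_le_add_left ?_ σ2) (hγ k)) (hpG k)
  calc ∑ j ∈ univ.erase k, p j * G k j
      = ∑ j ∈ univ.erase (k : ι) with P j, p j * G k j :=
        sum_erase_val_eq_sum_filter k fun j => p j * G k j
    _ ≤ _ := sum_le_sum_of_subset_of_nonneg (filter_subset _ _)
      fun j _ _ => mul_nonneg (hp j) (hG k j)

theorem MeetsSINRTargets.extend {G : Matrix ι ι ℝ} {σ2 : ℝ} {γ : ι → ℝ} {q : Subtype P → ℝ}
    (hγ : ∀ k, ¬P k → γ k = 0)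
    (hqG : MeetsSINRTargets (G.submatrix (↑) (↑)) σ2 (fun k : Subtype P => γ k) q) :
    MeetsSINRTargets G σ2 γ fun k => if hk : P k then q ⟨k, hk⟩ else 0 := by
  intro k
  by_cases hk : P k
  · have := hqG ⟨k, hk⟩
    dsimp only
    rw [dif_pos hk, ← sum_filter_of_ne (p := P) fun j _ hj => ?_]
    · rw [← sum_erase_val_eq_sum_filter ⟨k, hk⟩]
      convert this using 4 with j
      · simp [j.2]
      · rfl
    · by_contra hPj
      simp [hPj] at hj
  · simp [hk, hγ k hk]

theorem MeetsSINRTargets.exists_transpose {G : Matrix ι ι ℝ} {σ2 : ℝ} {γ p : ι → ℝ}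
    (hG : ∀ k j, 0 ≤ G k j) (hσ : 0 < σ2) (hγ : ∀ k, 0 ≤ γ k) (hp : 0 ≤ p)
    (hpG : MeetsSINRTargets G σ2 γ p) :
    ∃ q, 0 ≤ q ∧ ∑ k, q k ≤ ∑ k, p k ∧ MeetsSINRTargets Gᵀ σ2 γ q := by
  set P : ι → Prop := fun k => 0 < γ k
  obtain ⟨q, hq, hqp, hqG⟩ := (hpG.subtype P hG hγ hp).exists_transpose_of_pos
    (fun k j : Subtype P => hG k j) hσ (fun k => k.2) (fun k => hp k)
  refine ⟨fun k => if hk : P k then q ⟨k, hk⟩ else 0, fun k => ?_, ?_,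
    hqG.extend (G := Gᵀ) P fun k hk => le_antisymm (not_lt.1 hk) (hγ k)⟩
  · dsimp only
    split_ifs
    exacts [hq _, le_rfl]
  · calc ∑ k, (if hk : P k then q ⟨k, hk⟩ else 0) = ∑ k, q k := by
          rw [← Fintype.sum_subtype_add_sum_subtype P]
          simp [Subtype.prop, fun k : {k // ¬P k} => k.2]
      _ ≤ ∑ k : Subtype P, p k := hqp
      _ ≤ ∑ k, p k := by
          rw [← Fintype.sum_subtype_add_sum_subtype P p]
          exact le_add_of_nonneg_right (sum_nonneg fun k _ => hp k)

end SINRTargets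

section MISO

variable {N K : ℕ} {h W : Fin K → Fin N → ℂ} {σ2 : ℝ} {γ : Fin K → ℝ}

noncomputable def gainMatrix (h W : Fin K → Fin N → ℂ) : Matrix (Fin K) (Fin K) ℝ :=
  of fun k j => ‖ip (h k) (W j)‖ ^ 2

theorem forall_le_sinrDL_iff (hσ : 0 < σ2) {p : Fin K → ℝ} (hp : 0 ≤ p) :
    (∀ k, γ k ≤ sinrDL h σ2 W p k) ↔ MeetsSINRTargets (gainMatrix h W) σ2 γ p :=
  forall_congr' fun _ => le_div_iff₀ <|
    add_pos_of_nonneg_of_pos (sum_nonneg fun j _ => mul_nonneg (hp j) (sq_nonneg _)) hσ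

theorem forall_le_sinrUL_iff (hσ : 0 < σ2) {q : Fin K → ℝ} (hq : 0 ≤ q) :
    (∀ k, γ k ≤ sinrUL h σ2 W q k) ↔ MeetsSINRTargets (gainMatrix h W)ᵀ σ2 γ q :=
  forall_congr' fun _ => le_div_iff₀ <|
    add_pos_of_nonneg_of_pos (sum_nonneg fun j _ => mul_nonneg (hq j) (sq_nonneg _)) hσ

end MISO

theorem uplink_downlink_same_sinr_region_general
    {N K : ℕ}
    (h : Fin K → Fin N → ℂ) (σ2 : ℝ) (hσ : 0 < σ2)
    (Pmax : ℝ)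
    (W : Fin K → Fin N → ℂ)
    (γ : Fin K → ℝ) (hγ : ∀ k, 0 ≤ γ k) :
    (∃ p : Fin K → ℝ, (∀ k, 0 ≤ p k) ∧ (∑ k, p k) ≤ Pmax ∧
        ∀ k, γ k ≤ sinrDL h σ2 W p k) ↔
    (∃ q : Fin K → ℝ, (∀ k, 0 ≤ q k) ∧ (∑ k, q k) ≤ Pmax ∧
        ∀ k, γ k ≤ sinrUL h σ2 W q k) := by
  have hG : ∀ k j, 0 ≤ gainMatrix h W k j := fun _ _ => sq_nonneg _
  constructor
  · rintro ⟨p, hp, hpP, hdl⟩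
    obtain ⟨q, hq, hqp, hul⟩ :=
      ((forall_le_sinrDL_iff hσ hp).1 hdl).exists_transpose hG hσ hγ hp
    exact ⟨q, hq, hqp.trans hpP, (forall_le_sinrUL_iff hσ hq).2 hul⟩
  · rintro ⟨q, hq, hqP, hul⟩
    obtain ⟨p, hp, hpq, hdl⟩ :=
      ((forall_le_sinrUL_iff hσ hq).1 hul).exists_transpose (fun k j => hG j k) hσ hγ hq
    exact ⟨p, hp, hpq.trans hqP, (forall_le_sinrDL_iff hσ hp).2 hdl⟩

/-- Uplink and downlink achievable SINR regions coincide for fixed normalized beamformers. -/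
theorem uplink_downlink_same_sinr_region
    {N K : ℕ} (hN : 0 < N)
    (h : Fin K → Fin N → ℂ) (σ2 : ℝ) (hσ : 0 < σ2)
    (Pmax : ℝ) (hP : 0 < Pmax)
    (W : Fin K → Fin N → ℂ) (hW : ∀ k, ∑ i, ‖W k i‖ ^ 2 = 1)
    (γ : Fin K → ℝ) (hγ : ∀ k, 0 ≤ γ k) :
    (∃ p : Fin K → ℝ, (∀ k, 0 ≤ p k) ∧ (∑ k, p k) ≤ Pmax ∧
        ∀ k, γ k ≤ sinrDL h σ2 W p k) ↔
    (∃ q : Fin K → ℝ, (∀ k, 0 ≤ q k) ∧ (∑ k, q k) ≤ Pmax ∧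
        ∀ k, γ k ≤ sinrUL h σ2 W q k) :=
  uplink_downlink_same_sinr_region_general h σ2 hσ Pmax W γ hγ
end

section
/- Fix P_max > 0, positive weights ρ_1,…,ρ_K, and unit-norm beamformers w̃_1,…,w̃_K with h_k^H w̃_k ≠ 0 for every k. Let p ∈ ℝ^K be entrywise nonnegative and let λ > 0. Then the extended vector (p, 1) ∈ ℝ^{K+1} satisfies the eigenvector equation Υ(W̃, P_max)·(p, 1) = λ·(p, 1) if and only if Σ_k p_k = P_max and γ^dl_k(W̃,p)/ρ_k = 1/λ for every k. (Eigenvalue characterization of the balanced downlink power allocation.) -/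
open scoped BigOperators

/-- Entry `(k,j)` of the matrix `D · U`, where
`D = diag(ρ_k / |h_k^H w̃_k|²)` and `[U]_{kj} = |h_k^H w̃_j|²` for `j ≠ k`, `0` for `j = k`. -/
noncomputable def DU {N K : ℕ} (h : Fin K → Fin N → ℂ)
    (ρ : Fin K → ℝ) (W : Fin K → Fin N → ℂ) (k j : Fin K) : ℝ :=
  (ρ k / ‖ip (h k) (W k)‖ ^ 2) * (if j = k then 0 else ‖ip (h k) (W j)‖ ^ 2)

/-- `k`-th entry of the vector `D · σ⃗`, with `σ⃗ = σ² · 1`. -/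
noncomputable def Dsig {N K : ℕ} (h : Fin K → Fin N → ℂ) (σ2 : ℝ)
    (ρ : Fin K → ℝ) (W : Fin K → Fin N → ℂ) (k : Fin K) : ℝ :=
  (ρ k / ‖ip (h k) (W k)‖ ^ 2) * σ2

/-- The `(K+1) × (K+1)` matrix
`Υ(W̃, P_max) = [[DU, Dσ⃗], [(1/P_max)·1ᵀDU, (1/P_max)·1ᵀDσ⃗]]`. -/
noncomputable def Ups {N K : ℕ} (h : Fin K → Fin N → ℂ) (σ2 : ℝ)
    (ρ : Fin K → ℝ) (W : Fin K → Fin N → ℂ) (Pmax : ℝ) :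
    Matrix (Fin (K + 1)) (Fin (K + 1)) ℝ :=
  Matrix.of fun i j =>
    if hi : (i : ℕ) < K then
      if hj : (j : ℕ) < K then DU h ρ W ⟨i, hi⟩ ⟨j, hj⟩
      else Dsig h σ2 ρ W ⟨i, hi⟩
    else
      if hj : (j : ℕ) < K then (1 / Pmax) * ∑ k, DU h ρ W k ⟨j, hj⟩
      else (1 / Pmax) * ∑ k, Dsig h σ2 ρ W k

/-- Eigenvalue characterization of the balanced downlink power allocation. -/
theorem eigenvector_characterization_balanced_power
    {N K : ℕ} (hN : 0 < N) (hK : 0 < K)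
    (h : Fin K → Fin N → ℂ) (σ2 : ℝ) (hσ : 0 < σ2)
    (Pmax : ℝ) (hP : 0 < Pmax)
    (ρ : Fin K → ℝ) (hρ : ∀ k, 0 < ρ k)
    (W : Fin K → Fin N → ℂ) (hW : ∀ k, ∑ i, ‖W k i‖ ^ 2 = 1)
    (hnz : ∀ k, ip (h k) (W k) ≠ 0)
    (p : Fin K → ℝ) (hp : ∀ k, 0 ≤ p k)
    (lam : ℝ) (hlam : 0 < lam) :
    (Ups h σ2 ρ W Pmax).mulVec (Fin.snoc p 1) = lam • (Fin.snoc p 1 : Fin (K + 1) → ℝ) ↔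
    ((∑ k, p k) = Pmax ∧ ∀ k, sinrDL h σ2 W p k / ρ k = 1 / lam) := by
  classical
  have hgpos : ∀ k, (0:ℝ) < ‖ip (h k) (W k)‖ ^ 2 := fun k =>
    pow_pos (norm_pos_iff.mpr (hnz k)) 2
  set g : Fin K → ℝ := fun k => ‖ip (h k) (W k)‖ ^ 2 with hgdef
  set I : Fin K → ℝ := fun k => ∑ j ∈ Finset.univ.erase k, p j * ‖ip (h k) (W j)‖ ^ 2 with hIdef
  have hIpos : ∀ k, 0 < I k + σ2 := by
    intro k
    have : 0 ≤ I k := Finset.sum_nonneg fun j _ =>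
      mul_nonneg (hp j) (by positivity)
    linarith
  have hKK : ¬ (K < K) := lt_irrefl K
  have hrowsum : ∀ k : Fin K, ∑ j, DU h ρ W k j * p j = (ρ k / g k) * I k := by
    intro k
    have hterm : ∀ j : Fin K, DU h ρ W k j * p j
        = (ρ k / g k) * ((if j = k then 0 else ‖ip (h k) (W j)‖ ^ 2) * p j) := by
      intro j; simp [DU, mul_assoc, hgdef]
    simp only [hterm]
    rw [← Finset.mul_sum]
    congr 1
    show (∑ j, (if j = k then 0 else ‖ip (h k) (W j)‖ ^ 2) * p j)
        = ∑ j ∈ Finset.univ.erase k, p j * ‖ip (h k) (W j)‖ ^ 2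
    rw [← Finset.add_sum_erase _ _ (Finset.mem_univ k), if_pos rfl, zero_mul, zero_add]
    exact Finset.sum_congr rfl fun j hj => by
      rw [if_neg (Finset.ne_of_mem_erase hj), mul_comm]
  have hrow : ∀ k : Fin K,
      ((Ups h σ2 ρ W Pmax).mulVec (Fin.snoc p 1)) k.castSucc
        = (ρ k / g k) * (I k + σ2) := by
    intro k
    show ∑ j, Ups h σ2 ρ W Pmax k.castSucc j * (Fin.snoc p 1 : Fin (K+1) → ℝ) j = _
    rw [Fin.sum_univ_castSucc]
    simp only [Ups, Matrix.of_apply, Fin.coe_castSucc, Fin.snoc_castSucc, Fin.snoc_last,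
      Fin.val_last, hKK, dif_neg, not_false_iff, Fin.is_lt, dif_pos, Fin.eta]
    rw [hrowsum k]
    simp [Dsig, hgdef, mul_add]
  have hlast :
      ((Ups h σ2 ρ W Pmax).mulVec (Fin.snoc p 1)) (Fin.last K)
        = (1 / Pmax) * ∑ k, (ρ k / g k) * (I k + σ2) := by
    show ∑ j, Ups h σ2 ρ W Pmax (Fin.last K) j * (Fin.snoc p 1 : Fin (K+1) → ℝ) j = _
    rw [Fin.sum_univ_castSucc]
    simp only [Ups, Matrix.of_apply, Fin.coe_castSucc, Fin.snoc_castSucc, Fin.snoc_last,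
      Fin.val_last, hKK, dif_neg, not_false_iff, Fin.is_lt, dif_pos, Fin.eta]
    have hterm : ∀ j : Fin K, (1 / Pmax) * (∑ k, DU h ρ W k j) * p j
        = (1 / Pmax) * ∑ k, DU h ρ W k j * p j := by
      intro j; rw [mul_assoc, Finset.sum_mul]
    simp only [hterm]
    rw [mul_one, ← Finset.mul_sum, ← mul_add, Finset.sum_comm, ← Finset.sum_add_distrib]
    congr 1
    refine Finset.sum_congr rfl fun k _ => ?_
    rw [hrowsum k]
    simp [Dsig, hgdef, mul_add]
  have hsinr : ∀ k, sinrDL h σ2 W p k = p k * g k / (I k + σ2) := fun k => rfl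
  have hkequiv : ∀ k, ((ρ k / g k) * (I k + σ2) = lam * p k)
      ↔ (sinrDL h σ2 W p k / ρ k = 1 / lam) := by
    intro k
    rw [hsinr k]
    have h1 := hgpos k
    have h2 := hIpos k
    have h3 := hρ k
    have h1' : g k = ‖ip (h k) (W k)‖ ^ 2 := rfl
    rw [← h1'] at h1
    constructor <;> intro hE <;> field_simp at hE ⊢ <;> nlinarith [hE, h1, h2, h3, hlam]
  constructor
  · intro hEq
    have hper : ∀ k, (ρ k / g k) * (I k + σ2) = lam * p k := by
      intro k
      have := congrFun hEq k.castSucc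
      rw [hrow k] at this
      simpa using this
    have hlasteq := congrFun hEq (Fin.last K)
    rw [hlast] at hlasteq
    simp only [Pi.smul_apply, Fin.snoc_last, smul_eq_mul, mul_one] at hlasteq
    have hsum : ∑ k, (ρ k / g k) * (I k + σ2) = lam * ∑ k, p k := by
      rw [Finset.mul_sum]; exact Finset.sum_congr rfl fun k _ => hper k
    rw [hsum] at hlasteq
    refine ⟨?_, fun k => (hkequiv k).mp (hper k)⟩
    have h6 : Pmax * ((1 / Pmax) * (lam * ∑ k, p k)) = Pmax * lam :=
      congrArg (fun x => Pmax * x) hlasteq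
    rw [← mul_assoc, mul_one_div, div_self (ne_of_gt hP), one_mul] at h6
    have h7 : lam * (∑ k, p k) = lam * Pmax := h6.trans (mul_comm Pmax lam)
    exact mul_left_cancel₀ (ne_of_gt hlam) h7
  · rintro ⟨hsum, hsinreq⟩
    have hper : ∀ k, (ρ k / g k) * (I k + σ2) = lam * p k :=
      fun k => (hkequiv k).mpr (hsinreq k)
    funext i
    refine Fin.lastCases ?_ ?_ i
    · rw [hlast]
      have hs : ∑ k, (ρ k / g k) * (I k + σ2) = lam * Pmax := by
        rw [← hsum, Finset.mul_sum]; exact Finset.sum_congr rfl fun k _ => hper k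
      rw [hs]
      simp only [Pi.smul_apply, Fin.snoc_last, smul_eq_mul, mul_one]
      field_simp
    · intro k
      rw [hrow k, hper k]
      simp
end

section
/- Fix P_max > 0 and positive weights ρ_1,…,ρ_K. If W* = (w*_1,…,w*_K) attains the supremum of min_k γ^dl_k(W)/ρ_k over all W with Σ_k ‖w_k‖₂² ≤ P_max, and the attained value min_k γ^dl_k(W*)/ρ_k is strictly positive, then the total power constraint is active at W*: Σ_k ‖w*_k‖₂² = P_max. -/
open scoped BigOperators

/-- Downlink SINR of user `k` for beamformers `W`. -/
noncomputable def sinrDL0 {N K : ℕ} (h : Fin K → Fin N → ℂ) (σ2 : ℝ)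
    (W : Fin K → Fin N → ℂ) (k : Fin K) : ℝ :=
  ‖ip (h k) (W k)‖ ^ 2 /
    ((∑ j ∈ Finset.univ.erase k, ‖ip (h k) (W j)‖ ^ 2) + σ2)

lemma ip_mul_right {N : ℕ} (a b : Fin N → ℂ) (t : ℂ) :
    ip a (fun i => t * b i) = t * ip a b := by
  unfold ip
  rw [Finset.mul_sum]
  exact Finset.sum_congr rfl fun i _ => by ring

/-- At an optimum of the SINR balancing problem with strictly positive value,
the total power constraint is active. -/
theorem sinr_balancing_power_constraint_active
    {N K : ℕ} (hN : 0 < N) (hK : 0 < K)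
    (h : Fin K → Fin N → ℂ) (σ2 : ℝ) (hσ : 0 < σ2)
    (Pmax : ℝ) (hP : 0 < Pmax)
    (ρ : Fin K → ℝ) (hρ : ∀ k, 0 < ρ k)
    (Wstar : Fin K → Fin N → ℂ)
    (hfeas : (∑ k, ∑ i, ‖Wstar k i‖ ^ 2) ≤ Pmax)
    (hopt : ∀ W : Fin K → Fin N → ℂ, (∑ k, ∑ i, ‖W k i‖ ^ 2) ≤ Pmax →
      (⨅ k, sinrDL0 h σ2 W k / ρ k) ≤ ⨅ k, sinrDL0 h σ2 Wstar k / ρ k)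
    (hpos : 0 < ⨅ k, sinrDL0 h σ2 Wstar k / ρ k) :
    (∑ k, ∑ i, ‖Wstar k i‖ ^ 2) = Pmax := by
  haveI : Nonempty (Fin K) := ⟨⟨0, hK⟩⟩
  by_contra hne
  have hlt : (∑ k, ∑ i, ‖Wstar k i‖ ^ 2) < Pmax := lt_of_le_of_ne hfeas hne
  set f : Fin K → ℝ := fun k => sinrDL0 h σ2 Wstar k / ρ k with hf
  have hbdd : BddBelow (Set.range f) := (Set.finite_range f).bddBelow
  -- each user's signal power is positive
  have hApos : ∀ k, 0 < ‖ip (h k) (Wstar k)‖ ^ 2 := by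
    intro k
    have h1 : 0 < f k := lt_of_lt_of_le hpos (ciInf_le hbdd k)
    have h2 : 0 < sinrDL0 h σ2 Wstar k := by
      have := (div_pos_iff).mp h1
      rcases this with ⟨hs, _⟩ | ⟨_, hr⟩
      · exact hs
      · exact absurd hr (not_lt.mpr (hρ k).le)
    have hden : 0 < (∑ j ∈ Finset.univ.erase k, ‖ip (h k) (Wstar j)‖ ^ 2) + σ2 := by
      have : 0 ≤ ∑ j ∈ Finset.univ.erase k, ‖ip (h k) (Wstar j)‖ ^ 2 :=
        Finset.sum_nonneg fun j _ => by positivity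
      linarith
    have := (div_pos_iff).mp h2
    rcases this with ⟨hs, _⟩ | ⟨_, hr⟩
    · exact hs
    · exact absurd hr (not_lt.mpr hden.le)
  -- total power is positive
  set P : ℝ := ∑ k, ∑ i, ‖Wstar k i‖ ^ 2 with hPdef
  have hPpos : 0 < P := by
    set k0 : Fin K := ⟨0, hK⟩
    have hW : Wstar k0 ≠ 0 := by
      intro h0
      have hip : ip (h k0) (Wstar k0) = 0 := by
        unfold ip; rw [h0]; simp
      have hA := hApos k0
      rw [hip] at hA
      simp at hA
    obtain ⟨i, hi⟩ := Function.ne_iff.mp hW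
    have h1 : 0 < ∑ i, ‖Wstar k0 i‖ ^ 2 := by
      have hni : 0 < ‖Wstar k0 i‖ := norm_pos_iff.mpr hi
      have : 0 < ‖Wstar k0 i‖ ^ 2 := by positivity
      have hle : ‖Wstar k0 i‖ ^ 2 ≤ ∑ i, ‖Wstar k0 i‖ ^ 2 :=
        Finset.single_le_sum (f := fun j => ‖Wstar k0 j‖ ^ 2) (fun j _ => by positivity)
          (Finset.mem_univ i)
      linarith
    have hle : (∑ i, ‖Wstar k0 i‖ ^ 2) ≤ P :=
      Finset.single_le_sum (f := fun k => ∑ i, ‖Wstar k i‖ ^ 2)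
        (fun k _ => Finset.sum_nonneg fun i _ => by positivity) (Finset.mem_univ k0)
    linarith
  -- scale up
  set t : ℝ := Real.sqrt (Pmax / P) with ht
  have htpos : 0 < t := Real.sqrt_pos.mpr (div_pos hP hPpos)
  have ht2 : t ^ 2 = Pmax / P := Real.sq_sqrt (div_pos hP hPpos).le
  have ht1 : 1 < t ^ 2 := by
    rw [ht2]; rw [lt_div_iff₀ hPpos]; linarith
  set W' : Fin K → Fin N → ℂ := fun k i => (t : ℂ) * Wstar k i with hW'
  have hnorm : ∀ (k : Fin K) (j : Fin K), ‖ip (h k) (W' j)‖ ^ 2 = t ^ 2 * ‖ip (h k) (Wstar j)‖ ^ 2 := by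
    intro k j
    have : ip (h k) (W' j) = (t : ℂ) * ip (h k) (Wstar j) := ip_mul_right _ _ _
    rw [this, norm_mul, Complex.norm_real, Real.norm_eq_abs, abs_of_pos htpos, mul_pow]
  have hpow : (∑ k, ∑ i, ‖W' k i‖ ^ 2) = Pmax := by
    have : ∀ (k : Fin K) (i : Fin N), ‖W' k i‖ ^ 2 = t ^ 2 * ‖Wstar k i‖ ^ 2 := by
      intro k i
      rw [hW']
      simp only [norm_mul, Complex.norm_real, Real.norm_eq_abs, abs_of_pos htpos, mul_pow]
    simp only [this, ← Finset.mul_sum]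
    rw [← hPdef, ht2, div_mul_cancel₀ _ (ne_of_gt hPpos)]
  have hstrict : ∀ k, f k < sinrDL0 h σ2 W' k / ρ k := by
    intro k
    have key : sinrDL0 h σ2 Wstar k < sinrDL0 h σ2 W' k := by
      unfold sinrDL0
      simp only [hnorm, ← Finset.mul_sum]
      set A := ‖ip (h k) (Wstar k)‖ ^ 2 with hA
      set B := ∑ j ∈ Finset.univ.erase k, ‖ip (h k) (Wstar j)‖ ^ 2 with hB
      have hBnn : 0 ≤ B := Finset.sum_nonneg fun j _ => by positivity
      have hApos' := hApos k
      have hA' : 0 < A := by rw [hA]; exact hApos'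
      rw [div_lt_div_iff₀ (by linarith) (by nlinarith)]
      nlinarith [mul_pos (mul_pos hA' hσ) (sub_pos.mpr ht1)]
    rw [hf]
    exact div_lt_div_of_pos_right key (hρ k)
  have hle2 := hopt W' (le_of_eq hpow)
  obtain ⟨k0, hk0⟩ := Finite.exists_min (fun k => sinrDL0 h σ2 W' k / ρ k)
  have h1 : (⨅ k, f k) ≤ f k0 := ciInf_le hbdd k0
  have h2 : sinrDL0 h σ2 W' k0 / ρ k0 ≤ ⨅ k, sinrDL0 h σ2 W' k / ρ k := le_ciInf hk0
  have h3 := hstrict k0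
  have h4 : (⨅ k, sinrDL0 h σ2 Wstar k / ρ k) = ⨅ k, f k := rfl
  rw [h4] at hle2
  linarith
end

section
/- Fix SINR targets Γ_1,…,Γ_K > 0 and unit-norm beamformers w̃_1,…,w̃_K. If p, q ∈ ℝ^K are entrywise nonnegative power vectors such that γ^dl_k(W̃,p) = Γ_k and γ^ul_k(W̃,q) = Γ_k for every k, then the total downlink and uplink transmit powers are equal: Σ_k p_k = Σ_k q_k. (Total power equality in uplink–downlink duality.) -/
open scoped BigOperators

/-- Total power equality in uplink–downlink duality. -/
theorem total_power_equality_duality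
    {N K : ℕ} (hN : 0 < N)
    (h : Fin K → Fin N → ℂ) (σ2 : ℝ) (hσ : 0 < σ2)
    (Γ : Fin K → ℝ) (hΓ : ∀ k, 0 < Γ k)
    (W : Fin K → Fin N → ℂ) (hW : ∀ k, ∑ i, ‖W k i‖ ^ 2 = 1)
    (p q : Fin K → ℝ) (hp : ∀ k, 0 ≤ p k) (hq : ∀ k, 0 ≤ q k)
    (hdl : ∀ k, sinrDL h σ2 W p k = Γ k)
    (hul : ∀ k, sinrUL h σ2 W q k = Γ k) :
    (∑ k, p k) = ∑ k, q k := by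
  classical
  set G : Fin K → Fin K → ℝ := fun k j => ‖ip (h k) (W j)‖ ^ 2 with hG
  have hGnn : ∀ k j, 0 ≤ G k j := fun k j => by positivity
  have hDdl : ∀ k, 0 < (∑ j ∈ Finset.univ.erase k, p j * G k j) + σ2 := fun k =>
    add_pos_of_nonneg_of_pos
      (Finset.sum_nonneg fun j _ => mul_nonneg (hp j) (hGnn k j)) hσ
  have hDul : ∀ k, 0 < (∑ j ∈ Finset.univ.erase k, q j * G j k) + σ2 := fun k =>
    add_pos_of_nonneg_of_pos
      (Finset.sum_nonneg fun j _ => mul_nonneg (hq j) (hGnn j k)) hσ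
  have Hdl : ∀ k, p k * G k k
      = Γ k * ((∑ j ∈ Finset.univ.erase k, p j * G k j) + σ2) := by
    intro k
    have := hdl k
    rw [sinrDL, div_eq_iff (ne_of_gt (hDdl k))] at this
    simpa [hG] using this
  have Hul : ∀ k, q k * G k k
      = Γ k * ((∑ j ∈ Finset.univ.erase k, q j * G j k) + σ2) := by
    intro k
    have := hul k
    rw [sinrUL, div_eq_iff (ne_of_gt (hDul k))] at this
    simpa [hG] using this
  -- key: multiply dl eq by q k / Γ k and ul eq by p k / Γ k, sum up
  have key : ∑ k, q k * ((∑ j ∈ Finset.univ.erase k, p j * G k j) + σ2)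
      = ∑ k, p k * ((∑ j ∈ Finset.univ.erase k, q j * G j k) + σ2) := by
    have e1 : ∀ k : Fin K, q k * ((∑ j ∈ Finset.univ.erase k, p j * G k j) + σ2)
        = q k * p k * G k k / Γ k := by
      intro k
      rw [eq_div_iff (ne_of_gt (hΓ k))]
      linear_combination (-(q k)) * Hdl k
    have e2 : ∀ k : Fin K, p k * ((∑ j ∈ Finset.univ.erase k, q j * G j k) + σ2)
        = q k * p k * G k k / Γ k := by
      intro k
      rw [eq_div_iff (ne_of_gt (hΓ k))]
      linear_combination (-(p k)) * Hul k
    rw [Finset.sum_congr rfl fun k _ => e1 k, Finset.sum_congr rfl fun k _ => e2 k]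
  -- cross-term symmetry
  have cross : ∑ k, ∑ j ∈ Finset.univ.erase k, q k * (p j * G k j)
      = ∑ k, ∑ j ∈ Finset.univ.erase k, p k * (q j * G j k) := by
    rw [Finset.sum_comm' (t' := Finset.univ)
      (s' := fun j => Finset.univ.erase j)
      (fun k j => by simp [eq_comm, ne_comm])]
    exact Finset.sum_congr rfl fun k _ => Finset.sum_congr rfl fun j _ => by ring
  -- expand key
  have expand : ∀ (r : Fin K → ℝ) (A : Fin K → ℝ),
      ∑ k, r k * (A k + σ2) = (∑ k, r k * A k) + σ2 * ∑ k, r k := by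
    intro r A
    rw [Finset.mul_sum, ← Finset.sum_add_distrib]
    exact Finset.sum_congr rfl fun k _ => by ring
  have hq' : (∑ k, ∑ j ∈ Finset.univ.erase k, q k * (p j * G k j)) + σ2 * ∑ k, q k
      = (∑ k, ∑ j ∈ Finset.univ.erase k, p k * (q j * G j k)) + σ2 * ∑ k, p k := by
    have l1 := expand q (fun k => ∑ j ∈ Finset.univ.erase k, p j * G k j)
    have l2 := expand p (fun k => ∑ j ∈ Finset.univ.erase k, q j * G j k)
    have l3 : ∀ k : Fin K, q k * ∑ j ∈ Finset.univ.erase k, p j * G k j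
        = ∑ j ∈ Finset.univ.erase k, q k * (p j * G k j) := fun k => Finset.mul_sum _ _ _
    have l4 : ∀ k : Fin K, p k * ∑ j ∈ Finset.univ.erase k, q j * G j k
        = ∑ j ∈ Finset.univ.erase k, p k * (q j * G j k) := fun k => Finset.mul_sum _ _ _
    calc (∑ k, ∑ j ∈ Finset.univ.erase k, q k * (p j * G k j)) + σ2 * ∑ k, q k
        = (∑ k, q k * ∑ j ∈ Finset.univ.erase k, p j * G k j) + σ2 * ∑ k, q k := by
          rw [Finset.sum_congr rfl fun k _ => (l3 k).symm]
      _ = ∑ k, q k * ((∑ j ∈ Finset.univ.erase k, p j * G k j) + σ2) := by rw [l1]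
      _ = ∑ k, p k * ((∑ j ∈ Finset.univ.erase k, q j * G j k) + σ2) := key
      _ = (∑ k, p k * ∑ j ∈ Finset.univ.erase k, q j * G j k) + σ2 * ∑ k, p k := l2
      _ = (∑ k, ∑ j ∈ Finset.univ.erase k, p k * (q j * G j k)) + σ2 * ∑ k, p k := by
          rw [Finset.sum_congr rfl fun k _ => l4 k]
  rw [cross] at hq'
  have : σ2 * ∑ k, q k = σ2 * ∑ k, p k := by linarith
  have := mul_left_cancel₀ (ne_of_gt hσ) this
  linarith
end

section
/- Fix SINR targets Γ_1,…,Γ_K > 0 and assume both feasible sets below are nonempty and both infima are attained. Then for any fixed unit-norm beamformers w̃_1,…,w̃_K, the minimal total downlink power equals the minimal total uplink power: inf{ Σ_k p_k : p ∈ ℝ^K, p ≥ 0, γ^dl_k(W̃,p) ≥ Γ_k for all k } = inf{ Σ_k q_k : q ∈ ℝ^K, q ≥ 0, γ^ul_k(W̃,q) ≥ Γ_k for all k }. (Uplink–downlink duality for power minimization with fixed normalized beamformers.) -/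
open scoped BigOperators

lemma UDD_erase_to_ite {K : ℕ} (G : Fin K → Fin K → ℝ) (k : Fin K) :
    ∑ j ∈ Finset.univ.erase k, G k j = ∑ j, if j = k then 0 else G k j := by
  classical
  rw [show (Finset.univ.erase k) = Finset.univ.filter (fun j => ¬ j = k) from by
      ext j; simp [Finset.mem_erase], Finset.sum_filter]
  exact Finset.sum_congr rfl fun j _ => by by_cases hj : j = k <;> simp [hj]

/-- Swapping a double sum over off-diagonal pairs. -/
lemma UDD_sum_erase_swap {K : ℕ} (F : Fin K → Fin K → ℝ) :
    ∑ k, ∑ j ∈ Finset.univ.erase k, F k j = ∑ k, ∑ j ∈ Finset.univ.erase k, F j k := by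
  calc ∑ k, ∑ j ∈ Finset.univ.erase k, F k j
      = ∑ k, ∑ j, if j = k then 0 else F k j :=
        Finset.sum_congr rfl fun k _ => UDD_erase_to_ite F k
    _ = ∑ j, ∑ k, if j = k then 0 else F k j := Finset.sum_comm
    _ = ∑ k, ∑ j, if j = k then 0 else F j k := by
        refine Finset.sum_congr rfl fun a _ => Finset.sum_congr rfl fun b _ => ?_
        by_cases hab : a = b
        · simp [hab]
        · rw [if_neg hab, if_neg fun hh => hab hh.symm]
    _ = ∑ k, ∑ j ∈ Finset.univ.erase k, F j k :=
        (Finset.sum_congr rfl fun k _ => (UDD_erase_to_ite (fun a b => F b a) k)).symm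

/-- At an optimum of the power-minimization problem (in cleared form), all constraints
    are tight. -/
lemma UDD_tight {K : ℕ} (σ2 : ℝ) (hσ : 0 < σ2) (Γ d : Fin K → ℝ) (hΓ : ∀ k, 0 < Γ k)
    (A : Fin K → Fin K → ℝ) (hA : ∀ k j, 0 ≤ A k j)
    (p : Fin K → ℝ) (hp0 : ∀ k, 0 ≤ p k)
    (hfeas : ∀ k, Γ k * ((∑ j ∈ Finset.univ.erase k, p j * A k j) + σ2) ≤ p k * d k)
    (hmin : ∀ p' : Fin K → ℝ, (∀ k, 0 ≤ p' k) →
      (∀ k, Γ k * ((∑ j ∈ Finset.univ.erase k, p' j * A k j) + σ2) ≤ p' k * d k) →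
      ∑ k, p k ≤ ∑ k, p' k) :
    ∀ k, Γ k * ((∑ j ∈ Finset.univ.erase k, p j * A k j) + σ2) = p k * d k := by
  intro k
  by_contra hne
  have hlt : Γ k * ((∑ j ∈ Finset.univ.erase k, p j * A k j) + σ2) < p k * d k :=
    lt_of_le_of_ne (hfeas k) hne
  set I := ∑ j ∈ Finset.univ.erase k, p j * A k j with hI
  have hInn : 0 ≤ I :=
    Finset.sum_nonneg fun j _ => mul_nonneg (hp0 j) (hA k j)
  have hpos : 0 < Γ k * (I + σ2) := mul_pos (hΓ k) (by linarith)
  have hpd : 0 < p k * d k := lt_trans hpos hlt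
  have hdk : 0 < d k := by
    by_contra hc
    push_neg at hc
    have : p k * d k ≤ 0 := mul_nonpos_iff.mpr (Or.inl ⟨hp0 k, hc⟩)
    linarith
  set c := Γ k * (I + σ2) / d k with hc
  have hck : c < p k := (div_lt_iff₀ hdk).mpr (by linarith [hlt])
  have hc0 : 0 ≤ c := le_of_lt (div_pos hpos hdk)
  set p' := Function.update p k c with hp'
  have hp'0 : ∀ j, 0 ≤ p' j := by
    intro j
    rcases eq_or_ne j k with rfl | hjk
    · simpa [hp'] using hc0
    · simpa [hp', Function.update_of_ne hjk] using hp0 j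
  have hle : ∀ j, p' j ≤ p j := by
    intro j
    rcases eq_or_ne j k with rfl | hjk
    · simpa [hp'] using le_of_lt hck
    · simp [hp', Function.update_of_ne hjk]
  have hIk : ∑ j ∈ Finset.univ.erase k, p' j * A k j = I := by
    refine Finset.sum_congr rfl fun j hj => ?_
    rw [hp', Function.update_of_ne (Finset.ne_of_mem_erase hj)]
  have hfeas' : ∀ m, Γ m * ((∑ j ∈ Finset.univ.erase m, p' j * A m j) + σ2) ≤ p' m * d m := by
    intro m
    rcases eq_or_ne m k with rfl | hmk
    · rw [hIk]
      have hpm : p' m = c := by simp [hp']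
      rw [hpm, hc, div_mul_cancel₀ _ (ne_of_gt hdk)]
    · have hIm : ∑ j ∈ Finset.univ.erase m, p' j * A m j
          ≤ ∑ j ∈ Finset.univ.erase m, p j * A m j :=
        Finset.sum_le_sum fun j _ => mul_le_mul_of_nonneg_right (hle j) (hA m j)
      have h1 : Γ m * ((∑ j ∈ Finset.univ.erase m, p' j * A m j) + σ2)
          ≤ Γ m * ((∑ j ∈ Finset.univ.erase m, p j * A m j) + σ2) :=
        mul_le_mul_of_nonneg_left (by linarith) (le_of_lt (hΓ m))
      have h2 := hfeas m
      have h3 : p' m = p m := Function.update_of_ne hmk _ _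
      rw [h3]; linarith
  have hsum : ∑ j, p' j < ∑ j, p j := by
    have h1 : ∑ j, p' j = c + ∑ j ∈ Finset.univ.erase k, p j := by
      rw [hp', Finset.sum_update_of_mem (Finset.mem_univ k)]
      congr 1
      rw [Finset.sdiff_singleton_eq_erase]
    have h2 : ∑ j, p j = p k + ∑ j ∈ Finset.univ.erase k, p j :=
      (Finset.add_sum_erase _ _ (Finset.mem_univ k)).symm
    linarith
  exact absurd (hmin p' hp'0 hfeas') (not_le.mpr hsum)

/-- Core comparison: if `p` satisfies all constraints (for coupling matrix `A`) with
equality and `q` is feasible for the transposed problem, then `∑ p ≤ ∑ q`. -/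
lemma UDD_compare {K : ℕ} (σ2 : ℝ) (hσ : 0 < σ2) (Γ d : Fin K → ℝ) (hΓ : ∀ k, 0 < Γ k)
    (A : Fin K → Fin K → ℝ)
    (p q : Fin K → ℝ) (hp0 : ∀ k, 0 ≤ p k)
    (htight : ∀ k, Γ k * ((∑ j ∈ Finset.univ.erase k, p j * A k j) + σ2) = p k * d k)
    (hfeas : ∀ k, Γ k * ((∑ j ∈ Finset.univ.erase k, q j * A j k) + σ2) ≤ q k * d k) :
    ∑ k, p k ≤ ∑ k, q k := by
  have hS : ∀ k, q k * ((∑ j ∈ Finset.univ.erase k, p j * A k j) + σ2)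
      = p k * (q k * d k / Γ k) := by
    intro k
    have hΓk : (Γ k : ℝ) ≠ 0 := (hΓ k).ne'
    have hx : (∑ j ∈ Finset.univ.erase k, p j * A k j) + σ2 = p k * d k / Γ k := by
      rw [eq_div_iff hΓk]
      linear_combination htight k
    rw [hx]
    ring
  have hT : ∀ k, p k * ((∑ j ∈ Finset.univ.erase k, q j * A j k) + σ2)
      ≤ p k * (q k * d k / Γ k) := by
    intro k
    refine mul_le_mul_of_nonneg_left ?_ (hp0 k)
    rw [le_div_iff₀ (hΓ k)]
    nlinarith [hfeas k]
  have h1 : ∑ k, q k * ((∑ j ∈ Finset.univ.erase k, p j * A k j) + σ2)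
      = (∑ k, ∑ j ∈ Finset.univ.erase k, q k * (p j * A k j)) + σ2 * ∑ k, q k := by
    calc ∑ k, q k * ((∑ j ∈ Finset.univ.erase k, p j * A k j) + σ2)
        = ∑ k, ((∑ j ∈ Finset.univ.erase k, q k * (p j * A k j)) + q k * σ2) :=
          Finset.sum_congr rfl fun k _ => by rw [mul_add, Finset.mul_sum]
      _ = (∑ k, ∑ j ∈ Finset.univ.erase k, q k * (p j * A k j)) + ∑ k, q k * σ2 :=
          Finset.sum_add_distrib
      _ = (∑ k, ∑ j ∈ Finset.univ.erase k, q k * (p j * A k j)) + σ2 * ∑ k, q k := by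
          rw [Finset.mul_sum]
          exact congrArg _ (Finset.sum_congr rfl fun k _ => mul_comm _ _)
  have h2 : ∑ k, p k * ((∑ j ∈ Finset.univ.erase k, q j * A j k) + σ2)
      = (∑ k, ∑ j ∈ Finset.univ.erase k, p k * (q j * A j k)) + σ2 * ∑ k, p k := by
    calc ∑ k, p k * ((∑ j ∈ Finset.univ.erase k, q j * A j k) + σ2)
        = ∑ k, ((∑ j ∈ Finset.univ.erase k, p k * (q j * A j k)) + p k * σ2) :=
          Finset.sum_congr rfl fun k _ => by rw [mul_add, Finset.mul_sum]
      _ = (∑ k, ∑ j ∈ Finset.univ.erase k, p k * (q j * A j k)) + ∑ k, p k * σ2 :=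
          Finset.sum_add_distrib
      _ = (∑ k, ∑ j ∈ Finset.univ.erase k, p k * (q j * A j k)) + σ2 * ∑ k, p k := by
          rw [Finset.mul_sum]
          exact congrArg _ (Finset.sum_congr rfl fun k _ => mul_comm _ _)
  have hsw : ∑ k, ∑ j ∈ Finset.univ.erase k, q k * (p j * A k j)
      = ∑ k, ∑ j ∈ Finset.univ.erase k, p k * (q j * A j k) := by
    rw [UDD_sum_erase_swap (fun k j => q k * (p j * A k j))]
    exact Finset.sum_congr rfl fun k _ => Finset.sum_congr rfl fun j _ => by ring
  have hA' : ∑ k, q k * ((∑ j ∈ Finset.univ.erase k, p j * A k j) + σ2)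
      = ∑ k, p k * (q k * d k / Γ k) := Finset.sum_congr rfl fun k _ => hS k
  have hB' : ∑ k, p k * ((∑ j ∈ Finset.univ.erase k, q j * A j k) + σ2)
      ≤ ∑ k, p k * (q k * d k / Γ k) := Finset.sum_le_sum fun k _ => hT k
  have hfin : σ2 * ∑ k, p k ≤ σ2 * ∑ k, q k := by
    rw [h1, hsw] at hA'
    rw [h2] at hB'
    linarith
  exact le_of_mul_le_mul_left hfin hσ

/-- Clear the denominator of the downlink SINR constraint. -/
lemma UDD_dl_clear {N K : ℕ} (h : Fin K → Fin N → ℂ) (σ2 : ℝ) (hσ : 0 < σ2)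
    (W : Fin K → Fin N → ℂ) (Γ : ℝ) (p : Fin K → ℝ) (hp0 : ∀ k, 0 ≤ p k) (k : Fin K) :
    Γ ≤ sinrDL h σ2 W p k ↔
      Γ * ((∑ j ∈ Finset.univ.erase k, p j * ‖ip (h k) (W j)‖ ^ 2) + σ2)
        ≤ p k * ‖ip (h k) (W k)‖ ^ 2 := by
  have hden : 0 < (∑ j ∈ Finset.univ.erase k, p j * ‖ip (h k) (W j)‖ ^ 2) + σ2 := by
    have : 0 ≤ ∑ j ∈ Finset.univ.erase k, p j * ‖ip (h k) (W j)‖ ^ 2 :=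
      Finset.sum_nonneg fun j _ => mul_nonneg (hp0 j) (by positivity)
    linarith
  unfold sinrDL
  rw [le_div_iff₀ hden, mul_comm]

/-- Clear the denominator of the uplink SINR constraint. -/
lemma UDD_ul_clear {N K : ℕ} (h : Fin K → Fin N → ℂ) (σ2 : ℝ) (hσ : 0 < σ2)
    (W : Fin K → Fin N → ℂ) (Γ : ℝ) (q : Fin K → ℝ) (hq0 : ∀ k, 0 ≤ q k) (k : Fin K) :
    Γ ≤ sinrUL h σ2 W q k ↔
      Γ * ((∑ j ∈ Finset.univ.erase k, q j * ‖ip (h j) (W k)‖ ^ 2) + σ2)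
        ≤ q k * ‖ip (h k) (W k)‖ ^ 2 := by
  have hden : 0 < (∑ j ∈ Finset.univ.erase k, q j * ‖ip (h j) (W k)‖ ^ 2) + σ2 := by
    have : 0 ≤ ∑ j ∈ Finset.univ.erase k, q j * ‖ip (h j) (W k)‖ ^ 2 :=
      Finset.sum_nonneg fun j _ => mul_nonneg (hq0 j) (by positivity)
    linarith
  unfold sinrUL
  rw [le_div_iff₀ hden, mul_comm]

/-- Uplink–downlink duality for power minimization with fixed normalized beamformers. -/
theorem uplink_downlink_duality_power_minimization
    {N K : ℕ} (hN : 0 < N)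
    (h : Fin K → Fin N → ℂ) (σ2 : ℝ) (hσ : 0 < σ2)
    (Γ : Fin K → ℝ) (hΓ : ∀ k, 0 < Γ k)
    (W : Fin K → Fin N → ℂ) (hW : ∀ k, ∑ i, ‖W k i‖ ^ 2 = 1)
    (hdl_ne : {v : ℝ | ∃ p : Fin K → ℝ, (∀ k, 0 ≤ p k) ∧
        (∀ k, Γ k ≤ sinrDL h σ2 W p k) ∧ v = ∑ k, p k}.Nonempty)
    (hul_ne : {v : ℝ | ∃ q : Fin K → ℝ, (∀ k, 0 ≤ q k) ∧
        (∀ k, Γ k ≤ sinrUL h σ2 W q k) ∧ v = ∑ k, q k}.Nonempty)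
    (hdl_att : sInf {v : ℝ | ∃ p : Fin K → ℝ, (∀ k, 0 ≤ p k) ∧
        (∀ k, Γ k ≤ sinrDL h σ2 W p k) ∧ v = ∑ k, p k} ∈
        {v : ℝ | ∃ p : Fin K → ℝ, (∀ k, 0 ≤ p k) ∧
        (∀ k, Γ k ≤ sinrDL h σ2 W p k) ∧ v = ∑ k, p k})
    (hul_att : sInf {v : ℝ | ∃ q : Fin K → ℝ, (∀ k, 0 ≤ q k) ∧
        (∀ k, Γ k ≤ sinrUL h σ2 W q k) ∧ v = ∑ k, q k} ∈
        {v : ℝ | ∃ q : Fin K → ℝ, (∀ k, 0 ≤ q k) ∧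
        (∀ k, Γ k ≤ sinrUL h σ2 W q k) ∧ v = ∑ k, q k}) :
    sInf {v : ℝ | ∃ p : Fin K → ℝ, (∀ k, 0 ≤ p k) ∧
        (∀ k, Γ k ≤ sinrDL h σ2 W p k) ∧ v = ∑ k, p k} =
    sInf {v : ℝ | ∃ q : Fin K → ℝ, (∀ k, 0 ≤ q k) ∧
        (∀ k, Γ k ≤ sinrUL h σ2 W q k) ∧ v = ∑ k, q k} := by
  classical
  obtain ⟨p, hp0, hpF, hpsum⟩ := hdl_att
  obtain ⟨q, hq0, hqF, hqsum⟩ := hul_att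
  -- both feasible sets are bounded below by 0
  have hbdd_dl : BddBelow {v : ℝ | ∃ p : Fin K → ℝ, (∀ k, 0 ≤ p k) ∧
      (∀ k, Γ k ≤ sinrDL h σ2 W p k) ∧ v = ∑ k, p k} := by
    refine ⟨0, fun v hv => ?_⟩
    obtain ⟨r, hr0, -, rfl⟩ := hv
    exact Finset.sum_nonneg fun k _ => hr0 k
  have hbdd_ul : BddBelow {v : ℝ | ∃ q : Fin K → ℝ, (∀ k, 0 ≤ q k) ∧
      (∀ k, Γ k ≤ sinrUL h σ2 W q k) ∧ v = ∑ k, q k} := by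
    refine ⟨0, fun v hv => ?_⟩
    obtain ⟨r, hr0, -, rfl⟩ := hv
    exact Finset.sum_nonneg fun k _ => hr0 k
  -- cleared (linear) form of the feasibility constraints
  have hpC : ∀ k, Γ k * ((∑ j ∈ Finset.univ.erase k, p j * ‖ip (h k) (W j)‖ ^ 2) + σ2)
      ≤ p k * ‖ip (h k) (W k)‖ ^ 2 :=
    fun k => (UDD_dl_clear h σ2 hσ W (Γ k) p hp0 k).mp (hpF k)
  have hqC : ∀ k, Γ k * ((∑ j ∈ Finset.univ.erase k, q j * ‖ip (h j) (W k)‖ ^ 2) + σ2)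
      ≤ q k * ‖ip (h k) (W k)‖ ^ 2 :=
    fun k => (UDD_ul_clear h σ2 hσ W (Γ k) q hq0 k).mp (hqF k)
  -- minimality of p and q in cleared form
  have hpmin : ∀ p' : Fin K → ℝ, (∀ k, 0 ≤ p' k) →
      (∀ k, Γ k * ((∑ j ∈ Finset.univ.erase k, p' j * ‖ip (h k) (W j)‖ ^ 2) + σ2)
        ≤ p' k * ‖ip (h k) (W k)‖ ^ 2) → ∑ k, p k ≤ ∑ k, p' k := by
    intro p' h0 hC
    have hmem : (∑ k, p' k) ∈ {v : ℝ | ∃ p : Fin K → ℝ, (∀ k, 0 ≤ p k) ∧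
        (∀ k, Γ k ≤ sinrDL h σ2 W p k) ∧ v = ∑ k, p k} :=
      ⟨p', h0, fun k => (UDD_dl_clear h σ2 hσ W (Γ k) p' h0 k).mpr (hC k), rfl⟩
    have := csInf_le hbdd_dl hmem
    linarith [hpsum ▸ this]
  have hqmin : ∀ q' : Fin K → ℝ, (∀ k, 0 ≤ q' k) →
      (∀ k, Γ k * ((∑ j ∈ Finset.univ.erase k, q' j * ‖ip (h j) (W k)‖ ^ 2) + σ2)
        ≤ q' k * ‖ip (h k) (W k)‖ ^ 2) → ∑ k, q k ≤ ∑ k, q' k := by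
    intro q' h0 hC
    have hmem : (∑ k, q' k) ∈ {v : ℝ | ∃ q : Fin K → ℝ, (∀ k, 0 ≤ q k) ∧
        (∀ k, Γ k ≤ sinrUL h σ2 W q k) ∧ v = ∑ k, q k} :=
      ⟨q', h0, fun k => (UDD_ul_clear h σ2 hσ W (Γ k) q' h0 k).mpr (hC k), rfl⟩
    have := csInf_le hbdd_ul hmem
    linarith [hqsum ▸ this]
  -- tightness at the optimum
  have hptight := UDD_tight σ2 hσ Γ (fun k => ‖ip (h k) (W k)‖ ^ 2) hΓ
    (fun k j => ‖ip (h k) (W j)‖ ^ 2) (fun k j => by positivity) p hp0 hpC hpmin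
  have hqtight := UDD_tight σ2 hσ Γ (fun k => ‖ip (h k) (W k)‖ ^ 2) hΓ
    (fun k j => ‖ip (h j) (W k)‖ ^ 2) (fun k j => by positivity) q hq0 hqC hqmin
  -- the two comparison directions
  have dir1 : ∑ k, p k ≤ ∑ k, q k :=
    UDD_compare σ2 hσ Γ (fun k => ‖ip (h k) (W k)‖ ^ 2) hΓ
      (fun k j => ‖ip (h k) (W j)‖ ^ 2) p q hp0 hptight hqC
  have dir2 : ∑ k, q k ≤ ∑ k, p k :=
    UDD_compare σ2 hσ Γ (fun k => ‖ip (h k) (W k)‖ ^ 2) hΓ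
      (fun k j => ‖ip (h j) (W k)‖ ^ 2) q p hq0 hqtight hpC
  rw [hpsum, hqsum]
  exact le_antisymm dir1 dir2
end

section
/- Fix SINR targets Γ_1,…,Γ_K > 0 and suppose the pair (q*, W̃*), with q* ∈ ℝ^K entrywise nonnegative and ‖w̃*_k‖₂ = 1 for all k, attains the minimum of Σ_k q_k over all nonnegative q and all unit-norm W̃ subject to γ^ul_k(W̃,q) ≥ Γ_k for all k. Assume the matrix Ψ built from W̃* is invertible. Then p* := σ² Ψ⁻¹ 1 ∈ ℝ^K is entrywise nonnegative, and the downlink beamformers w*_k = √(p*_k)·w̃*_k satisfy γ^dl_k(W*) ≥ Γ_k for all k and are optimal for the downlink power minimization problem P2: every W = (w_1,…,w_K) with γ^dl_k(W) ≥ Γ_k for all k satisfies Σ_k ‖w_k‖₂² ≥ Σ_k ‖w*_k‖₂². (Lemma 2, downlink beamforming recovery from the optimal uplink solution.) -/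
open scoped BigOperators

/-- The matrix `Ψ` with `[Ψ]_{kk} = |h_k^H w̃_k|²/Γ_k` and
`[Ψ]_{kk'} = −|h_k^H w̃_{k'}|²` for `k' ≠ k`. -/
noncomputable def Psi {N K : ℕ} (h : Fin K → Fin N → ℂ) (Γ : Fin K → ℝ)
    (W : Fin K → Fin N → ℂ) : Matrix (Fin K) (Fin K) ℝ :=
  Matrix.of fun k j =>
    if j = k then ‖ip (h k) (W k)‖ ^ 2 / Γ k else -‖ip (h k) (W j)‖ ^ 2

/-- Core M-matrix positivity lemma. -/
lemma lemmaM {K : ℕ} (A : Matrix (Fin K) (Fin K) ℝ)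
    (hZ : ∀ j k, j ≠ k → A j k ≤ 0)
    (y : Fin K → ℝ) (hy : ∀ k, 0 ≤ y k)
    (hAy : ∀ k, 0 < ∑ j, A j k * y j)
    (x : Fin K → ℝ) (hx : ∀ j, 0 ≤ ∑ k, A j k * x k) :
    ∀ k, 0 ≤ x k := by
  set xm : Fin K → ℝ := fun k => max (-x k) 0 with hxm
  have hxm_nonneg : ∀ k, 0 ≤ xm k := fun k => le_max_right _ _
  have hxp : ∀ k, 0 ≤ x k + xm k := by
    intro k
    rcases le_or_gt 0 (x k) with hk | hk
    · have : 0 ≤ xm k := hxm_nonneg k; linarith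
    · simp only [hxm]
      rw [max_eq_left (by linarith)]
      linarith
  have key : ∀ j, (∑ k, A j k * xm k) ≤ 0 := by
    intro j
    rcases le_or_gt 0 (x j) with hj | hj
    · have hxmj : xm j = 0 := by simp [hxm]; linarith
      have : ∑ k, A j k * xm k = ∑ k ∈ Finset.univ.erase j, A j k * xm k + A j j * xm j :=
        (Finset.sum_erase_add _ _ (Finset.mem_univ j)).symm
      rw [this, hxmj, mul_zero, add_zero]
      apply Finset.sum_nonpos
      intro k hk
      exact mul_nonpos_of_nonpos_of_nonneg (hZ j k (Finset.ne_of_mem_erase hk).symm) (hxm_nonneg k)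
    · have hxmj : xm j = -x j := by simp [hxm]; linarith
      have hdiag : -(A j j * x j) ≤ ∑ k ∈ Finset.univ.erase j, A j k * x k := by
        have := hx j
        rw [← Finset.sum_erase_add _ _ (Finset.mem_univ j)] at this
        linarith
      have split : ∑ k, A j k * xm k
          = ∑ k ∈ Finset.univ.erase j, A j k * xm k + A j j * xm j :=
        (Finset.sum_erase_add _ _ (Finset.mem_univ j)).symm
      rw [split, hxmj]
      have : ∑ k ∈ Finset.univ.erase j, A j k * xm k + A j j * -x j
          ≤ ∑ k ∈ Finset.univ.erase j, A j k * xm k + ∑ k ∈ Finset.univ.erase j, A j k * x k := by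
        have h1 : A j j * -x j = -(A j j * x j) := by ring
        rw [h1]; linarith
      refine le_trans this ?_
      rw [← Finset.sum_add_distrib]
      apply Finset.sum_nonpos
      intro k hk
      have : A j k * xm k + A j k * x k = A j k * (x k + xm k) := by ring
      rw [this]
      exact mul_nonpos_of_nonpos_of_nonneg (hZ j k (Finset.ne_of_mem_erase hk).symm) (hxp k)
  have total : ∑ k, (∑ j, A j k * y j) * xm k ≤ 0 := by
    have swap : ∑ k, (∑ j, A j k * y j) * xm k = ∑ j, y j * ∑ k, A j k * xm k := by
      simp only [Finset.sum_mul, Finset.mul_sum]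
      rw [Finset.sum_comm]
      apply Finset.sum_congr rfl; intro j _
      apply Finset.sum_congr rfl; intro k _
      ring
    rw [swap]
    apply Finset.sum_nonpos
    intro j _
    exact mul_nonpos_of_nonneg_of_nonpos (hy j) (key j)
  intro k
  by_contra hneg
  push_neg at hneg
  have hxmk : 0 < xm k := by simp [hxm]; linarith
  have hterm : 0 < (∑ j, A j k * y j) * xm k := mul_pos (hAy k) hxmk
  have hsum_nonneg : ∀ j ∈ Finset.univ, (0:ℝ) ≤ (∑ i, A i j * y i) * xm j := by
    intro j _
    exact mul_nonneg (le_of_lt (hAy j)) (hxm_nonneg j)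
  have : 0 < ∑ k, (∑ j, A j k * y j) * xm k :=
    Finset.sum_pos' hsum_nonneg ⟨k, Finset.mem_univ k, hterm⟩
  linarith

lemma ip_smul {N : ℕ} (a b : Fin N → ℂ) (c : ℂ) :
    ip a (fun i => c * b i) = c * ip a b := by
  simp only [ip, Finset.mul_sum]
  apply Finset.sum_congr rfl; intro i _; ring

lemma gain_scale {N : ℕ} (a b : Fin N → ℂ) (c : ℝ) (hc : 0 ≤ c) :
    ‖ip a (fun i => ((Real.sqrt c : ℝ) : ℂ) * b i)‖ ^ 2 = c * ‖ip a b‖ ^ 2 := by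
  rw [ip_smul, norm_mul, mul_pow, Complex.norm_real, Real.norm_eq_abs,
    abs_of_nonneg (Real.sqrt_nonneg c), Real.sq_sqrt hc]

lemma normsum_scale {N : ℕ} (b : Fin N → ℂ) (c : ℝ) (hc : 0 ≤ c) :
    ∑ i, ‖((Real.sqrt c : ℝ) : ℂ) * b i‖ ^ 2 = c * ∑ i, ‖b i‖ ^ 2 := by
  rw [Finset.mul_sum]
  apply Finset.sum_congr rfl; intro i _
  rw [norm_mul, mul_pow, Complex.norm_real, Real.norm_eq_abs,
    abs_of_nonneg (Real.sqrt_nonneg c), Real.sq_sqrt hc]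

lemma le_sinr_div_iff (Γ a b σ2 : ℝ) (hσ : 0 < σ2) (hb : 0 ≤ b) :
    Γ ≤ a / (b + σ2) ↔ Γ * (b + σ2) ≤ a :=
  le_div_iff₀ (by linarith)


lemma mulVec_apply' {K : ℕ} (M : Matrix (Fin K) (Fin K) ℝ) (v : Fin K → ℝ) (k : Fin K) :
    M.mulVec v k = ∑ j, M k j * v j := rfl


lemma Psi_row {N K : ℕ} (h : Fin K → Fin N → ℂ) (Γ : Fin K → ℝ)
    (W : Fin K → Fin N → ℂ) (v : Fin K → ℝ) (k : Fin K) :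
    ∑ j, Psi h Γ W k j * v j
      = ‖ip (h k) (W k)‖ ^ 2 / Γ k * v k
        - ∑ j ∈ Finset.univ.erase k, v j * ‖ip (h k) (W j)‖ ^ 2 := by
  rw [← Finset.sum_erase_add _ _ (Finset.mem_univ k)]
  have h1 : Psi h Γ W k k = ‖ip (h k) (W k)‖ ^ 2 / Γ k := by simp [Psi]
  have h2 : ∀ j ∈ Finset.univ.erase k,
      Psi h Γ W k j * v j = -(v j * ‖ip (h k) (W j)‖ ^ 2) := by
    intro j hj
    have hne : j ≠ k := Finset.ne_of_mem_erase hj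
    simp only [Psi, Matrix.of_apply, if_neg hne]; ring
  rw [Finset.sum_congr rfl h2, h1, Finset.sum_neg_distrib]; ring

lemma Psi_col {N K : ℕ} (h : Fin K → Fin N → ℂ) (Γ : Fin K → ℝ)
    (W : Fin K → Fin N → ℂ) (v : Fin K → ℝ) (k : Fin K) :
    ∑ j, Psi h Γ W j k * v j
      = ‖ip (h k) (W k)‖ ^ 2 / Γ k * v k
        - ∑ j ∈ Finset.univ.erase k, v j * ‖ip (h j) (W k)‖ ^ 2 := by
  rw [← Finset.sum_erase_add _ _ (Finset.mem_univ k)]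
  have h1 : Psi h Γ W k k = ‖ip (h k) (W k)‖ ^ 2 / Γ k := by simp [Psi]
  have h2 : ∀ j ∈ Finset.univ.erase k,
      Psi h Γ W j k * v j = -(v j * ‖ip (h j) (W k)‖ ^ 2) := by
    intro j hj
    have hne : k ≠ j := (Finset.ne_of_mem_erase hj).symm
    simp only [Psi, Matrix.of_apply, if_neg hne]; ring
  rw [Finset.sum_congr rfl h2, h1, Finset.sum_neg_distrib]; ring

/-- Lemma 2: downlink beamforming recovery from the optimal uplink solution. -/
theorem downlink_recovery_from_optimal_uplink
    {N K : ℕ} (hN : 0 < N)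
    (h : Fin K → Fin N → ℂ) (σ2 : ℝ) (hσ : 0 < σ2)
    (Γ : Fin K → ℝ) (hΓ : ∀ k, 0 < Γ k)
    (qstar : Fin K → ℝ) (hq : ∀ k, 0 ≤ qstar k)
    (Wt : Fin K → Fin N → ℂ) (hWt : ∀ k, ∑ i, ‖Wt k i‖ ^ 2 = 1)
    (hfeas : ∀ k, Γ k ≤ sinrUL h σ2 Wt qstar k)
    (hopt : ∀ (q : Fin K → ℝ) (W : Fin K → Fin N → ℂ),
      (∀ k, 0 ≤ q k) → (∀ k, ∑ i, ‖W k i‖ ^ 2 = 1) →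
      (∀ k, Γ k ≤ sinrUL h σ2 W q k) →
      (∑ k, qstar k) ≤ ∑ k, q k)
    (hPsi : IsUnit (Psi h Γ Wt).det) :
    (∀ k, 0 ≤ ((Psi h Γ Wt)⁻¹.mulVec (fun _ => σ2)) k) ∧
    (∀ k, Γ k ≤ sinrDL0 h σ2
        (fun k' i => (Real.sqrt (((Psi h Γ Wt)⁻¹.mulVec (fun _ => σ2)) k') : ℂ) * Wt k' i) k) ∧
    (∀ W : Fin K → Fin N → ℂ, (∀ k, Γ k ≤ sinrDL0 h σ2 W k) →
      (∑ k, ∑ i, ‖(Real.sqrt (((Psi h Γ Wt)⁻¹.mulVec (fun _ => σ2)) k) : ℂ) * Wt k i‖ ^ 2)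
        ≤ ∑ k, ∑ i, ‖W k i‖ ^ 2) := by
  classical
  set g : Fin K → Fin K → ℝ := fun k j => ‖ip (h k) (Wt j)‖ ^ 2 with hg
  have hg0 : ∀ k j, 0 ≤ g k j := fun k j => by positivity
  set p : Fin K → ℝ := (Psi h Γ Wt)⁻¹.mulVec (fun _ => σ2) with hp
  -- interference terms are nonneg
  have hIul : ∀ (q : Fin K → ℝ) (W : Fin K → Fin N → ℂ), (∀ k, 0 ≤ q k) → ∀ k,
      0 ≤ ∑ j ∈ Finset.univ.erase k, q j * ‖ip (h j) (W k)‖ ^ 2 := by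
    intro q W hq0 k
    exact Finset.sum_nonneg fun j _ => mul_nonneg (hq0 j) (by positivity)
  -- rearranged feasibility
  have hfeas' : ∀ k, Γ k * ((∑ j ∈ Finset.univ.erase k, qstar j * g j k) + σ2)
      ≤ qstar k * g k k := by
    intro k
    have := hfeas k
    rw [sinrUL, le_sinr_div_iff _ _ _ _ hσ (hIul qstar Wt hq k)] at this
    exact this
  have hgkk : ∀ k, 0 < g k k ∧ 0 < qstar k := by
    intro k
    have h1 : 0 < Γ k * ((∑ j ∈ Finset.univ.erase k, qstar j * g j k) + σ2) :=
      mul_pos (hΓ k) (by have := hIul qstar Wt hq k; linarith)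
    have h2 : 0 < qstar k * g k k := lt_of_lt_of_le h1 (hfeas' k)
    constructor
    · rcases (mul_pos_iff.mp h2) with ⟨_, h⟩ | ⟨h, _⟩
      · exact h
      · exact absurd h (not_lt.mpr (hq k))
    · rcases (mul_pos_iff.mp h2) with ⟨h, _⟩ | ⟨_, h⟩
      · exact h
      · exact absurd h (not_lt.mpr (hg0 k k))
  -- Step A : tightness of the uplink constraints at the optimum
  have htight : ∀ k, qstar k * g k k
      = Γ k * ((∑ j ∈ Finset.univ.erase k, qstar j * g j k) + σ2) := by
    intro k0
    by_contra hne
    have h0 : (0:ℝ) ≤ ∑ j ∈ Finset.univ.erase k0, qstar j * g j k0 := hIul qstar Wt hq k0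
    set D : ℝ := (∑ j ∈ Finset.univ.erase k0, qstar j * g j k0) + σ2 with hD
    have hDpos : 0 < D := by rw [hD]; linarith
    have hlt : Γ k0 * D < qstar k0 * g k0 k0 := (hfeas' k0).lt_of_ne fun e => hne e.symm
    have hgk : 0 < g k0 k0 := (hgkk k0).1
    set t : ℝ := Γ k0 * D / g k0 k0 with ht
    have ht0 : 0 ≤ t :=
      div_nonneg (mul_nonneg (le_of_lt (hΓ k0)) (le_of_lt hDpos)) (le_of_lt hgk)
    have htval : t * g k0 k0 = Γ k0 * D := div_mul_cancel₀ _ (ne_of_gt hgk)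
    have htlt : t < qstar k0 := by rw [ht, div_lt_iff₀ hgk]; exact hlt
    set q' : Fin K → ℝ := Function.update qstar k0 t with hq'
    have hq'le : ∀ k, q' k ≤ qstar k := by
      intro k; rcases eq_or_ne k k0 with rfl | hk
      · simpa [hq'] using le_of_lt htlt
      · simp [hq', Function.update_of_ne hk]
    have hq'nn : ∀ k, 0 ≤ q' k := by
      intro k; rcases eq_or_ne k k0 with rfl | hk
      · simpa [hq'] using ht0
      · rw [hq', Function.update_of_ne hk]; exact hq k
    have hq'feas : ∀ k, Γ k ≤ sinrUL h σ2 Wt q' k := by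
      intro k
      rw [sinrUL, le_sinr_div_iff _ _ _ _ hσ (hIul q' Wt hq'nn k)]
      show Γ k * ((∑ j ∈ Finset.univ.erase k, q' j * g j k) + σ2) ≤ q' k * g k k
      rcases eq_or_ne k k0 with rfl | hk
      · have hsum : ∑ j ∈ Finset.univ.erase k, q' j * g j k
            = ∑ j ∈ Finset.univ.erase k, qstar j * g j k := by
          apply Finset.sum_congr rfl; intro j hj
          rw [hq', Function.update_of_ne (Finset.ne_of_mem_erase hj)]
        have hqk0 : q' k = t := by rw [hq']; simp
        rw [hsum, hqk0, htval, hD]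
      · have hmono : ∑ j ∈ Finset.univ.erase k, q' j * g j k
            ≤ ∑ j ∈ Finset.univ.erase k, qstar j * g j k := by
          apply Finset.sum_le_sum; intro j _
          exact mul_le_mul_of_nonneg_right (hq'le j) (hg0 j k)
        have hqk : q' k = qstar k := by rw [hq', Function.update_of_ne hk]
        rw [hqk]
        calc Γ k * ((∑ j ∈ Finset.univ.erase k, q' j * g j k) + σ2)
            ≤ Γ k * ((∑ j ∈ Finset.univ.erase k, qstar j * g j k) + σ2) := by
              apply mul_le_mul_of_nonneg_left _ (le_of_lt (hΓ k)); linarith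
          _ ≤ qstar k * g k k := hfeas' k
    have hsumlt : ∑ k, q' k < ∑ k, qstar k := by
      apply Finset.sum_lt_sum (fun k _ => hq'le k)
      refine ⟨k0, Finset.mem_univ k0, ?_⟩
      have : q' k0 = t := by rw [hq']; simp
      rw [this]; exact htlt
    have := hopt q' Wt hq'nn hWt hq'feas
    linarith
  -- Ψᵀ q* = σ² 1
  have hPsiTq : ∀ k, ∑ j, Psi h Γ Wt j k * qstar j = σ2 := by
    intro k
    have hc := Psi_col h Γ Wt qstar k
    have ht := htight k
    have hΓk := hΓ k
    -- hc is in raw ‖·‖² form; convert to g form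
    have hc' : ∑ j, Psi h Γ Wt j k * qstar j
        = g k k / Γ k * qstar k - ∑ j ∈ Finset.univ.erase k, qstar j * g j k := hc
    rw [hc']
    have hdiv : g k k / Γ k * qstar k
        = (∑ j ∈ Finset.univ.erase k, qstar j * g j k) + σ2 := by
      rw [div_mul_eq_mul_div, mul_comm, ht, mul_comm, mul_div_assoc,
        div_self (ne_of_gt hΓk), mul_one]
    rw [hdiv]; ring
  -- Ψ p = σ² 1
  have hPp : ∀ k, ∑ j, Psi h Γ Wt k j * p j = σ2 := by
    intro k
    have hmul : (Psi h Γ Wt).mulVec p = fun _ => σ2 := by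
      rw [hp, Matrix.mulVec_mulVec, Matrix.mul_nonsing_inv _ hPsi, Matrix.one_mulVec]
    have := congrFun hmul k
    rw [mulVec_apply'] at this
    exact this
  -- p ≥ 0
  have hZ : ∀ j k : Fin K, j ≠ k → Psi h Γ Wt j k ≤ 0 := by
    intro j k hjk
    simp only [Psi, Matrix.of_apply]
    rw [if_neg (Ne.symm hjk)]
    exact neg_nonpos.mpr (by positivity)
  have hpnn : ∀ k, 0 ≤ p k := by
    apply lemmaM (Psi h Γ Wt) hZ qstar hq
    · intro k; rw [hPsiTq k]; exact hσ
    · intro j; rw [hPp j]; exact le_of_lt hσ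
  -- the downlink balance equation : p k * g k k = Γ k * (interference + σ2)
  have hbal : ∀ k, p k * g k k
      = Γ k * ((∑ j ∈ Finset.univ.erase k, p j * g k j) + σ2) := by
    intro k
    have hr := Psi_row h Γ Wt p k
    have hr' : ∑ j, Psi h Γ Wt k j * p j
        = g k k / Γ k * p k - ∑ j ∈ Finset.univ.erase k, p j * g k j := hr
    have he : g k k / Γ k * p k
        = (∑ j ∈ Finset.univ.erase k, p j * g k j) + σ2 := by
      have := hPp k
      rw [hr'] at this
      linarith
    have hΓk := hΓ k
    have : p k * g k k / Γ k = (∑ j ∈ Finset.univ.erase k, p j * g k j) + σ2 := by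
      rw [← he]; ring
    calc p k * g k k = Γ k * (p k * g k k / Γ k) := by
          field_simp
      _ = Γ k * ((∑ j ∈ Finset.univ.erase k, p j * g k j) + σ2) := by rw [this]
  refine ⟨hpnn, ?_, ?_⟩
  · -- downlink feasibility of the recovered beamformers
    intro k
    have hgain : ∀ j, ‖ip (h k) (fun i => ((Real.sqrt (p j) : ℝ) : ℂ) * Wt j i)‖ ^ 2
        = p j * g k j := fun j => gain_scale _ _ _ (hpnn j)
    rw [sinrDL0]
    simp only [hgain]
    have hIb : (0:ℝ) ≤ ∑ j ∈ Finset.univ.erase k, p j * g k j :=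
      Finset.sum_nonneg fun j _ => mul_nonneg (hpnn j) (hg0 k j)
    rw [le_sinr_div_iff _ _ _ _ hσ hIb]
    exact le_of_eq (hbal k).symm
  · -- optimality
    intro W hW
    set ρ : Fin K → ℝ := fun k => ∑ i, ‖W k i‖ ^ 2 with hρ
    have hρnn : ∀ k, 0 ≤ ρ k := fun k => Finset.sum_nonneg fun i _ => by positivity
    have hIdl : ∀ k, (0:ℝ) ≤ ∑ j ∈ Finset.univ.erase k, ‖ip (h k) (W j)‖ ^ 2 :=
      fun k => Finset.sum_nonneg fun j _ => by positivity
    have hW' : ∀ k, Γ k * ((∑ j ∈ Finset.univ.erase k, ‖ip (h k) (W j)‖ ^ 2) + σ2)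
        ≤ ‖ip (h k) (W k)‖ ^ 2 := by
      intro k
      have := hW k
      rw [sinrDL0, le_sinr_div_iff _ _ _ _ hσ (hIdl k)] at this
      exact this
    have hρpos : ∀ k, 0 < ρ k := by
      intro k
      have hnum : 0 < ‖ip (h k) (W k)‖ ^ 2 := by
        have h1 : 0 < Γ k * ((∑ j ∈ Finset.univ.erase k, ‖ip (h k) (W j)‖ ^ 2) + σ2) :=
          mul_pos (hΓ k) (by have := hIdl k; linarith)
        exact lt_of_lt_of_le h1 (hW' k)
      rcases lt_or_eq_of_le (hρnn k) with hlt | heq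
      · exact hlt
      · exfalso
        have hzero : ∀ i, W k i = 0 := by
          intro i
        -- each term of the zero sum of nonnegatives is zero
          have h1 : ∑ i, ‖W k i‖ ^ 2 = 0 := heq.symm
          have h2 := (Finset.sum_eq_zero_iff_of_nonneg
            (fun i (_ : i ∈ Finset.univ) => by positivity)).mp h1 i (Finset.mem_univ i)
          simpa [pow_eq_zero_iff, norm_eq_zero] using h2
        have : ip (h k) (W k) = 0 := by simp [ip, hzero]
        rw [this] at hnum; simp at hnum
    -- normalized beamformers
    set Wt' : Fin K → Fin N → ℂ :=
      fun k i => ((Real.sqrt ((ρ k)⁻¹) : ℝ) : ℂ) * W k i with hWt'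
    have hWt'norm : ∀ k, ∑ i, ‖Wt' k i‖ ^ 2 = 1 := by
      intro k
      rw [hWt']
      rw [normsum_scale _ _ (inv_nonneg.mpr (hρnn k))]
      exact inv_mul_cancel₀ (ne_of_gt (hρpos k))
    set g' : Fin K → Fin K → ℝ := fun k j => ‖ip (h k) (Wt' j)‖ ^ 2 with hg'
    have hg'0 : ∀ k j, 0 ≤ g' k j := fun k j => by positivity
    have hgW : ∀ k j, ‖ip (h k) (W j)‖ ^ 2 = ρ j * g' k j := by
      intro k j
      have : g' k j = (ρ j)⁻¹ * ‖ip (h k) (W j)‖ ^ 2 :=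
        gain_scale _ _ _ (inv_nonneg.mpr (hρnn j))
      rw [this, ← mul_assoc, mul_inv_cancel₀ (ne_of_gt (hρpos j)), one_mul]
    -- downlink feasibility in matrix form : (Ψ' ρ)_k ≥ σ2
    have hρfeas : ∀ k, σ2 ≤ ∑ j, Psi h Γ Wt' k j * ρ j := by
      intro k
      have hr : ∑ j, Psi h Γ Wt' k j * ρ j
          = g' k k / Γ k * ρ k - ∑ j ∈ Finset.univ.erase k, ρ j * g' k j :=
        Psi_row h Γ Wt' ρ k
      have hfk := hW' k
      have hsum : ∑ j ∈ Finset.univ.erase k, ‖ip (h k) (W j)‖ ^ 2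
          = ∑ j ∈ Finset.univ.erase k, ρ j * g' k j :=
        Finset.sum_congr rfl fun j _ => hgW k j
      rw [hsum, hgW k k] at hfk
      have hΓk := hΓ k
      rw [hr]
      have h2 : (∑ j ∈ Finset.univ.erase k, ρ j * g' k j) + σ2 ≤ ρ k * g' k k / Γ k := by
        rw [le_div_iff₀ hΓk]; linarith [hfk]
      have h3 : g' k k / Γ k * ρ k = ρ k * g' k k / Γ k := by ring
      linarith [h2, h3.le, h3.ge]
    -- the transposed matrix
    set A : Matrix (Fin K) (Fin K) ℝ := (Psi h Γ Wt').transpose with hA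
    have hZ' : ∀ j k : Fin K, j ≠ k → A j k ≤ 0 := by
      intro j k hjk
      show (Psi h Γ Wt') k j ≤ 0
      simp only [Psi, Matrix.of_apply]
      rw [if_neg hjk]
      exact neg_nonpos.mpr (by positivity)
    have hAcol : ∀ (v : Fin K → ℝ) k, ∑ j, A j k * v j = ∑ j, Psi h Γ Wt' k j * v j := by
      intro v k
      apply Finset.sum_congr rfl; intro j _
      rfl
    have hAy : ∀ k, 0 < ∑ j, A j k * ρ j := by
      intro k
      rw [hAcol]
      exact lt_of_lt_of_le hσ (hρfeas k)
    -- A.mulVec is injective hence surjective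
    have hker : ∀ z : Fin K → ℝ, A.mulVecLin z = 0 → z = 0 := by
      intro z hz
      have hz1 : ∀ j, A.mulVec z j = 0 := fun j => congrFun hz j
      have hpos : ∀ k, 0 ≤ z k := by
        apply lemmaM A hZ' ρ hρnn hAy
        intro j
        have := hz1 j
        rw [mulVec_apply'] at this
        rw [this]
      have hneg : ∀ k, 0 ≤ -z k := by
        apply lemmaM A hZ' ρ hρnn hAy
        intro j
        have h1 : A.mulVec (-z) = -(A.mulVec z) := Matrix.mulVec_neg _ _
        have h2 : A.mulVec (-z) j = 0 := by rw [h1]; simp [hz1 j]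
        rw [mulVec_apply'] at h2
        simp only [Pi.neg_apply] at h2
        rw [h2]
      funext k
      have := hpos k; have := hneg k
      simp only [Pi.zero_apply]
      linarith
    have hinj : Function.Injective A.mulVecLin :=
      (injective_iff_map_eq_zero A.mulVecLin).mpr hker
    have hsurj : Function.Surjective A.mulVecLin :=
      LinearMap.injective_iff_surjective.mp hinj
    obtain ⟨q', hq'⟩ := hsurj (fun _ => σ2)
    have hq'col : ∀ k, ∑ j, Psi h Γ Wt' j k * q' j = σ2 := by
      intro k
      have := congrFun hq' k
      rw [Matrix.mulVecLin_apply, mulVec_apply'] at this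
      rw [← this]
      apply Finset.sum_congr rfl; intro j _
      rfl
    have hq'nn : ∀ k, 0 ≤ q' k := by
      apply lemmaM A hZ' ρ hρnn hAy
      intro j
      have := congrFun hq' j
      rw [Matrix.mulVecLin_apply, mulVec_apply'] at this
      rw [this]
      exact le_of_lt hσ
    -- q' is uplink feasible for Wt'
    have hq'feas : ∀ k, Γ k ≤ sinrUL h σ2 Wt' q' k := by
      intro k
      rw [sinrUL, le_sinr_div_iff _ _ _ _ hσ (hIul q' Wt' hq'nn k)]
      have hc : ∑ j, Psi h Γ Wt' j k * q' j
          = g' k k / Γ k * q' k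
            - ∑ j ∈ Finset.univ.erase k, q' j * ‖ip (h j) (Wt' k)‖ ^ 2 :=
        Psi_col h Γ Wt' q' k
      have heq := hq'col k
      rw [hc] at heq
      have hΓk := hΓ k
      have h1 : g' k k / Γ k * q' k
          = (∑ j ∈ Finset.univ.erase k, q' j * ‖ip (h j) (Wt' k)‖ ^ 2) + σ2 := by
        linarith
      show Γ k * ((∑ j ∈ Finset.univ.erase k, q' j * ‖ip (h j) (Wt' k)‖ ^ 2) + σ2)
          ≤ q' k * g' k k
      rw [← h1]
      have : Γ k * (g' k k / Γ k * q' k) = q' k * g' k k := by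
        field_simp
      rw [this]
    -- sum comparisons
    have hsum1 : ∑ k, q' k ≤ ∑ k, ρ k := by
      have key : σ2 * ∑ k, q' k ≤ σ2 * ∑ k, ρ k := by
        have lhs : σ2 * ∑ k, q' k = ∑ k, q' k * σ2 := by
          rw [Finset.mul_sum]; apply Finset.sum_congr rfl; intro k _; ring
        have rhs : σ2 * ∑ k, ρ k = ∑ j, ρ j * σ2 := by
          rw [Finset.mul_sum]; apply Finset.sum_congr rfl; intro k _; ring
        rw [lhs, rhs]
        have step1 : ∑ k, q' k * σ2 ≤ ∑ k, q' k * ∑ j, Psi h Γ Wt' k j * ρ j :=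
          Finset.sum_le_sum fun k _ =>
            mul_le_mul_of_nonneg_left (hρfeas k) (hq'nn k)
        have step2 : ∑ k, q' k * ∑ j, Psi h Γ Wt' k j * ρ j
            = ∑ j, ρ j * ∑ k, Psi h Γ Wt' k j * q' k := by
          simp only [Finset.mul_sum]
          rw [Finset.sum_comm]
          apply Finset.sum_congr rfl; intro j _
          apply Finset.sum_congr rfl; intro k _
          ring
        have step3 : ∑ j, ρ j * ∑ k, Psi h Γ Wt' k j * q' k = ∑ j, ρ j * σ2 := by
          apply Finset.sum_congr rfl; intro j _
          rw [hq'col j]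
        linarith [step1, step2.le, step2.ge, step3.le, step3.ge]
      exact le_of_mul_le_mul_left key hσ
    have hsum2 : ∑ k, p k = ∑ k, qstar k := by
      have key : σ2 * ∑ k, p k = σ2 * ∑ k, qstar k := by
        have lhs : σ2 * ∑ k, p k = ∑ k, p k * σ2 := by
          rw [Finset.mul_sum]; apply Finset.sum_congr rfl; intro k _; ring
        have rhs : σ2 * ∑ k, qstar k = ∑ j, qstar j * σ2 := by
          rw [Finset.mul_sum]; apply Finset.sum_congr rfl; intro k _; ring
        rw [lhs, rhs]
        have step1 : ∑ k, p k * σ2 = ∑ k, p k * ∑ j, Psi h Γ Wt j k * qstar j := by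
          apply Finset.sum_congr rfl; intro k _
          rw [hPsiTq k]
        have step2 : ∑ k, p k * ∑ j, Psi h Γ Wt j k * qstar j
            = ∑ j, qstar j * ∑ k, Psi h Γ Wt j k * p k := by
          simp only [Finset.mul_sum]
          rw [Finset.sum_comm]
          apply Finset.sum_congr rfl; intro j _
          apply Finset.sum_congr rfl; intro k _
          ring
        have step3 : ∑ j, qstar j * ∑ k, Psi h Γ Wt j k * p k = ∑ j, qstar j * σ2 := by
          apply Finset.sum_congr rfl; intro j _
          rw [hPp j]
        rw [step1, step2, step3]
      exact mul_left_cancel₀ (ne_of_gt hσ) key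
    have hLHS : ∑ k, ∑ i, ‖((Real.sqrt (p k) : ℝ) : ℂ) * Wt k i‖ ^ 2 = ∑ k, p k := by
      apply Finset.sum_congr rfl; intro k _
      rw [normsum_scale _ _ (hpnn k), hWt k, mul_one]
    have hopt' := hopt q' Wt' hq'nn hWt'norm hq'feas
    calc ∑ k, ∑ i, ‖((Real.sqrt (p k) : ℝ) : ℂ) * Wt k i‖ ^ 2
        = ∑ k, p k := hLHS
      _ = ∑ k, qstar k := hsum2
      _ ≤ ∑ k, q' k := hopt'
      _ ≤ ∑ k, ρ k := hsum1
end

section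
/- Fix P_max > 0, positive user weights α_1,…,α_K, and noise variance σ² > 0. Suppose W* = (w*_1,…,w*_K) attains the maximum of the weighted sum rate Σ_k α_k log₂(1 + γ^dl_k(W)) over all W with Σ_k ‖w_k‖₂² ≤ P_max, and that γ^dl_k(W*) > 0 for every k. Set Γ_k := γ^dl_k(W*). Then W* is optimal for the power minimization problem with targets Γ_1,…,Γ_K: every W = (w_1,…,w_K) with γ^dl_k(W) ≥ Γ_k for all k satisfies Σ_k ‖w_k‖₂² ≥ Σ_k ‖w*_k‖₂². (Connection between the sum rate maximization problem P3 and the power minimization problem P2.) -/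
open scoped BigOperators

set_option maxHeartbeats 1000000

/-- Connection between the sum rate maximization problem P3 and the power
minimization problem P2: a sum-rate-optimal `W*` is power-minimal for the SINR
targets `Γ_k = γ^dl_k(W*)`. -/
theorem sum_rate_optimal_is_power_minimal
    {N K : ℕ} (hN : 0 < N)
    (h : Fin K → Fin N → ℂ) (σ2 : ℝ) (hσ : 0 < σ2)
    (Pmax : ℝ) (hP : 0 < Pmax)
    (α : Fin K → ℝ) (hα : ∀ k, 0 < α k)
    (Wstar : Fin K → Fin N → ℂ)
    (hfeas : (∑ k, ∑ i, ‖Wstar k i‖ ^ 2) ≤ Pmax)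
    (hopt : ∀ W : Fin K → Fin N → ℂ, (∑ k, ∑ i, ‖W k i‖ ^ 2) ≤ Pmax →
      (∑ k, α k * Real.logb 2 (1 + sinrDL0 h σ2 W k)) ≤
        ∑ k, α k * Real.logb 2 (1 + sinrDL0 h σ2 Wstar k))
    (hpos : ∀ k, 0 < sinrDL0 h σ2 Wstar k) :
    ∀ W : Fin K → Fin N → ℂ,
      (∀ k, sinrDL0 h σ2 Wstar k ≤ sinrDL0 h σ2 W k) →
      (∑ k, ∑ i, ‖Wstar k i‖ ^ 2) ≤ ∑ k, ∑ i, ‖W k i‖ ^ 2 := by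
  intro W hW
  by_contra hlt
  push_neg at hlt
  rcases Nat.eq_zero_or_pos K with hK0 | hK
  · subst hK0; simp at hlt
  haveI : NeZero K := ⟨hK.ne'⟩
  set P := ∑ k, ∑ i, ‖W k i‖ ^ 2 with hPdef
  set Q := ∑ k, ∑ i, ‖Wstar k i‖ ^ 2 with hQdef
  have hPnn : 0 ≤ P := by positivity
  -- numerators of SINRs of W are positive
  have hden : ∀ k, 0 < (∑ j ∈ Finset.univ.erase k, ‖ip (h k) (W j)‖ ^ 2) + σ2 := by
    intro k
    have : 0 ≤ ∑ j ∈ Finset.univ.erase k, ‖ip (h k) (W j)‖ ^ 2 := by positivity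
    linarith
  have ha : ∀ k, 0 < ‖ip (h k) (W k)‖ ^ 2 := by
    intro k
    have h1 : 0 < sinrDL0 h σ2 W k := lt_of_lt_of_le (hpos k) (hW k)
    by_contra hc
    push_neg at hc
    have : ‖ip (h k) (W k)‖ ^ 2 = 0 := le_antisymm hc (by positivity)
    rw [sinrDL0, this, zero_div] at h1
    exact lt_irrefl _ h1
  -- hence P > 0
  have hPpos : 0 < P := by
    rcases lt_or_eq_of_le hPnn with hp | hp
    · exact hp
    · exfalso
      have hzero : ∀ k i, W k i = 0 := by
        intro k i
        have h1 : ∑ k, ∑ i, ‖W k i‖ ^ 2 = 0 := hp.symm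
        have h2 : ∀ k ∈ Finset.univ, (∑ i, ‖W k i‖ ^ 2 : ℝ) = 0 := by
          refine (Finset.sum_eq_zero_iff_of_nonneg ?_).mp h1
          intro k _; positivity
        have h3 : ∀ i ∈ Finset.univ, (‖W k i‖ ^ 2 : ℝ) = 0 := by
          refine (Finset.sum_eq_zero_iff_of_nonneg ?_).mp (h2 k (Finset.mem_univ k))
          intro i _; positivity
        have := h3 i (Finset.mem_univ i)
        simpa [pow_eq_zero_iff] using this
      have k0 : Fin K := ⟨0, hK⟩
      have hip0 : ip (h k0) (W k0) = 0 := by simp [ip, hzero]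
      have hha := ha k0
      rw [hip0] at hha
      simp at hha
  have hQP : 1 < Q / P := (one_lt_div hPpos).mpr hlt
  set t := Real.sqrt (Q / P) with htdef
  have ht2 : t ^ 2 = Q / P := Real.sq_sqrt (by positivity)
  have ht1 : 1 < t := by
    have : Real.sqrt 1 < Real.sqrt (Q / P) := Real.sqrt_lt_sqrt (by norm_num) hQP
    simpa using this
  have htpos : 0 < t := lt_trans one_pos ht1
  set W' : Fin K → Fin N → ℂ := fun k i => (t : ℂ) * W k i with hW'def
  have hip : ∀ k j, ip (h k) (W' j) = (t : ℂ) * ip (h k) (W j) := by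
    intro k j
    simp only [ip, hW'def, Finset.mul_sum]
    refine Finset.sum_congr rfl fun i _ => by ring
  have hnorm : ∀ k j, ‖ip (h k) (W' j)‖ ^ 2 = t ^ 2 * ‖ip (h k) (W j)‖ ^ 2 := by
    intro k j
    rw [hip, norm_mul, mul_pow, Complex.norm_real, Real.norm_eq_abs,
      abs_of_pos htpos]
  -- power of W'
  have hpow : (∑ k, ∑ i, ‖W' k i‖ ^ 2) = Q := by
    have : ∀ k i, ‖W' k i‖ ^ 2 = t ^ 2 * ‖W k i‖ ^ 2 := by
      intro k i
      rw [hW'def]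
      simp only
      rw [norm_mul, mul_pow, Complex.norm_real, Real.norm_eq_abs, abs_of_pos htpos]
    simp only [this, ← Finset.mul_sum]
    rw [← hPdef, ht2, div_mul_cancel₀ _ hPpos.ne']
  -- SINR strictly increases
  have hsinr : ∀ k, sinrDL0 h σ2 W k < sinrDL0 h σ2 W' k := by
    intro k
    have hb : 0 ≤ ∑ j ∈ Finset.univ.erase k, ‖ip (h k) (W j)‖ ^ 2 :=
      Finset.sum_nonneg fun j _ => by positivity
    simp only [sinrDL0]
    have hsum : ∑ j ∈ Finset.univ.erase k, ‖ip (h k) (W' j)‖ ^ 2 =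
        t ^ 2 * ∑ j ∈ Finset.univ.erase k, ‖ip (h k) (W j)‖ ^ 2 := by
      rw [Finset.mul_sum]; exact Finset.sum_congr rfl fun j _ => hnorm k j
    rw [hsum, hnorm k k]
    set a := ‖ip (h k) (W k)‖ ^ 2
    set b := ∑ j ∈ Finset.univ.erase k, ‖ip (h k) (W j)‖ ^ 2
    have htb : 0 ≤ t ^ 2 * b := mul_nonneg (sq_nonneg t) hb
    have hden2 : 0 < t ^ 2 * b + σ2 := by linarith
    rw [div_lt_div_iff₀ (hden k) hden2]
    have hapos := ha k
    have ht2' : 1 < t ^ 2 := by nlinarith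
    have hkey : a * σ2 < t ^ 2 * (a * σ2) :=
      (lt_mul_iff_one_lt_left (mul_pos hapos hσ)).mpr ht2'
    nlinarith [hkey]
  -- strict sum rate inequality contradicts optimality
  have hfeas' : (∑ k, ∑ i, ‖W' k i‖ ^ 2) ≤ Pmax := by rw [hpow]; exact hfeas
  have hcontr := hopt W' hfeas'
  have hstrict : (∑ k, α k * Real.logb 2 (1 + sinrDL0 h σ2 Wstar k)) <
      ∑ k, α k * Real.logb 2 (1 + sinrDL0 h σ2 W' k) := by
    apply Finset.sum_lt_sum_of_nonempty Finset.univ_nonempty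
    intro k _
    have h1 := hpos k
    have h2 := hW k
    have h3 := hsinr k
    have hlog : Real.logb 2 (1 + sinrDL0 h σ2 Wstar k) <
        Real.logb 2 (1 + sinrDL0 h σ2 W' k) :=
      Real.logb_lt_logb (by norm_num) (by linarith) (by linarith)
    exact mul_lt_mul_of_pos_left hlog (hα k)
  linarith
end
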